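/- arXiv:1812.00358 — 13 statements merged into one kernel-verified Lean document; each statement's English description precedes it below -/
import Mathlib

section
/- For every pair of natural numbers p and q with p ≤ q ≤ 2p−1, and all k ∈ {1,…,pq}, one has p/⌈k/q⌉ ≤ 2·(q/⌈k/p⌉). -/
theorem stmt_2 (p q k : ℕ) (hp : 0 < p) (hpq : p ≤ q) (hq : q ≤ 2 * p - 1)
    (hk1 : 1 ≤ k) (hk2 : k ≤ p * q) :
    (p : ℝ) / (⌈(k : ℝ) / (q : ℝ)⌉₊ : ℝ) ≤ 2 * ((q : ℝ) / (⌈(k : ℝ) / (p : ℝ)⌉₊ : ℝ)) := by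
  have hk0 : (0:ℝ) < k := by exact_mod_cast hk1
  have hp0 : (0:ℝ) < p := by exact_mod_cast hp
  have hq0 : (0:ℝ) < q := lt_of_lt_of_le hp0 (by exact_mod_cast hpq)
  have ha : 0 < ⌈(k:ℝ)/q⌉₊ := Nat.ceil_pos.mpr (by positivity)
  have hb : 0 < ⌈(k:ℝ)/p⌉₊ := Nat.ceil_pos.mpr (by positivity)
  have hba : (⌈(k:ℝ)/p⌉₊ : ℝ) ≤ 2 * ⌈(k:ℝ)/q⌉₊ := by
    have : ⌈(k:ℝ)/p⌉₊ ≤ 2 * ⌈(k:ℝ)/q⌉₊ := by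
      rw [Nat.ceil_le, div_le_iff₀ hp0]
      have h1 : (k:ℝ) ≤ ⌈(k:ℝ)/q⌉₊ * q := by
        have h := Nat.le_ceil ((k:ℝ)/q)
        calc (k:ℝ) = (k/q) * q := by field_simp
          _ ≤ ⌈(k:ℝ)/q⌉₊ * q := by gcongr
      have h2 : (q:ℝ) ≤ 2*p := by
        have : q ≤ 2*p := by omega
        exact_mod_cast this
      push_cast
      calc (k:ℝ) ≤ ⌈(k:ℝ)/q⌉₊ * q := h1
        _ ≤ ⌈(k:ℝ)/q⌉₊ * (2*p) := by gcongr
        _ = 2 * ⌈(k:ℝ)/q⌉₊ * p := by ring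
    exact_mod_cast this
  have ha' : (0:ℝ) < ⌈(k:ℝ)/q⌉₊ := by exact_mod_cast ha
  have hb' : (0:ℝ) < ⌈(k:ℝ)/p⌉₊ := by exact_mod_cast hb
  rw [show (2:ℝ) * ((q:ℝ) / ⌈(k:ℝ)/p⌉₊) = (2*q) / ⌈(k:ℝ)/p⌉₊ from by ring,
    div_le_div_iff₀ ha' hb']
  have hpq' : (p:ℝ) ≤ q := by exact_mod_cast hpq
  nlinarith [mul_le_mul_of_nonneg_left hba hp0.le]
end

section
/- Let M be a homogeneous, monotone, and repetition invariant mean on (0,∞), and set dₙ := M(n/1, n/2, …, n/n). Then for all positive integers p, d_p ≤ d_{2p}. -/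
/-- `M` is a mean on the set `I`: its value on every nonempty tuple from `I`
lies between the minimum and the maximum of the tuple. -/
def IsMeanOn (I : Set ℝ) (M : ∀ n : ℕ, (Fin n → ℝ) → ℝ) : Prop :=
  ∀ (n : ℕ) (a : Fin (n + 1) → ℝ), (∀ i, a i ∈ I) →
    (⨅ i, a i) ≤ M (n + 1) a ∧ M (n + 1) a ≤ ⨆ i, a i

/-- `M` is (positively) homogeneous. -/
def IsHomogeneousMean (M : ∀ n : ℕ, (Fin n → ℝ) → ℝ) : Prop :=
  ∀ (t : ℝ), 0 < t → ∀ (n : ℕ) (a : Fin n → ℝ), (∀ i, 0 < a i) →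
    M n (fun i => t * a i) = t * M n a

/-- `M` is monotone (nondecreasing in each variable). -/
def IsMonotoneMean (M : ∀ n : ℕ, (Fin n → ℝ) → ℝ) : Prop :=
  ∀ (n : ℕ) (a b : Fin n → ℝ), (∀ i, 0 < a i) → (∀ i, a i ≤ b i) →
    M n a ≤ M n b

/-- `M` is repetition invariant: repeating every entry `m` times does not
change the value of the mean. -/
def IsRepetitionInvariant (M : ∀ n : ℕ, (Fin n → ℝ) → ℝ) : Prop :=
  ∀ (n m : ℕ), 0 < m → ∀ (a : Fin n → ℝ), (∀ i, 0 < a i) →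
    M (n * m) (fun i => a ⟨(i : ℕ) / m, Nat.div_lt_of_lt_mul
      (lt_of_lt_of_eq i.isLt (Nat.mul_comm n m))⟩) = M n a

/-- `M` is a weak-Hardy mean on `I`: for every summable sequence in `I` the
sequence of running means is summable. -/
def IsWeakHardyMean (I : Set ℝ) (M : ∀ n : ℕ, (Fin n → ℝ) → ℝ) : Prop :=
  ∀ a : ℕ → ℝ, (∀ n, a n ∈ I) → Summable a →
    Summable (fun n => M (n + 1) (fun k : Fin (n + 1) => a (k : ℕ)))

theorem stmt_3 (M : ∀ n : ℕ, (Fin n → ℝ) → ℝ)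
    (hmean : IsMeanOn (Set.Ioi 0) M)
    (hhom : IsHomogeneousMean M) (hmono : IsMonotoneMean M)
    (hrep : IsRepetitionInvariant M)
    (d : ℕ → ℝ) (hd : ∀ n, d n = M n (fun k : Fin n => (n : ℝ) / ((k : ℕ) + 1)))
    (p : ℕ) (hp : 0 < p) :
    d p ≤ d (2 * p) := by
  have hp' : (0:ℝ) < p := by exact_mod_cast hp
  have hpos : ∀ i : Fin p, (0:ℝ) < (p : ℝ) / ((i:ℕ) + 1) := fun i =>
    div_pos hp' (by positivity)
  rw [hd, hd]
  have h2 : 2 * p = p * 2 := Nat.mul_comm 2 p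
  rw [h2]
  have hrep' := hrep p 2 (by norm_num) (fun k : Fin p => (p : ℝ) / ((k:ℕ) + 1)) hpos
  rw [← hrep']
  apply hmono
  · intro i
    exact div_pos hp' (by positivity)
  · intro i
    simp only
    rw [div_le_div_iff₀ (by positivity) (by positivity)]
    have hnat : (i:ℕ) + 1 ≤ 2 * ((i:ℕ) / 2 + 1) := by omega
    have h := Nat.mul_le_mul_left p hnat
    calc (p:ℝ) * ((i:ℕ) + 1) = ((p * ((i:ℕ)+1) : ℕ) : ℝ) := by push_cast; ring
      _ ≤ ((p * (2 * ((i:ℕ)/2 + 1)) : ℕ) : ℝ) := by exact_mod_cast h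
      _ = ((p*2 : ℕ) : ℝ) * (((i:ℕ)/2 : ℕ) + 1) := by push_cast; ring
end

section
/- Let M be a homogeneous, monotone, and repetition invariant mean on (0,∞). Then the sequence dₙ := M(n/1, n/2, …, n/n) is nearly increasing with constant ε = 1/2, i.e., dₘ ≤ 2·dₙ for all m ≤ n. -/
/-!
Blow both tuples up to the common length `m * n` by repetition: `d m` becomes the mean of
`i ↦ m / (⌊i / n⌋ + 1)` and `d n` that of `i ↦ n / (⌊i / m⌋ + 1)`. Since `m * (⌊i / m⌋ + 1)` is the
least multiple of `m` above `i`, it lies in `(i, i + m]`, and likewise for `n`; for `m ≤ n` this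
bounds the first tuple pointwise by twice the second, and monotonicity and homogeneity finish.
-/

theorem Nat.mul_div_add_one_le_two_mul {m n : ℕ} (hmn : m ≤ n) (i : ℕ) :
    m * (i / m + 1) ≤ 2 * (n * (i / n + 1)) := by
  rcases n.eq_zero_or_pos with rfl | hn
  · simp [Nat.le_zero.mp hmn]
  have hm_le : m * (i / m) ≤ i := Nat.mul_div_le i m
  have hn_gt : i < n * (i / n + 1) := by
    simpa [Nat.mul_comm] using (Nat.div_lt_iff_lt_mul hn).mp (Nat.lt_succ_self (i / n))
  have hn_ge : n ≤ n * (i / n + 1) := Nat.le_mul_of_pos_right n (Nat.succ_pos _)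
  rw [Nat.mul_succ]
  omega

theorem div_div_add_one_le_two_mul {m n : ℕ} (hmn : m ≤ n) (i : ℕ) :
    (m : ℝ) / ((i / n : ℕ) + 1) ≤ 2 * ((n : ℝ) / ((i / m : ℕ) + 1)) := by
  rw [← mul_div_assoc, div_le_div_iff₀ (by positivity) (by positivity)]
  exact_mod_cast (by simpa [mul_assoc] using Nat.mul_div_add_one_le_two_mul hmn i :
    m * (i / m + 1) ≤ 2 * n * (i / n + 1))

theorem IsRepetitionInvariant.apply_comp_div {M : ∀ n : ℕ, (Fin n → ℝ) → ℝ}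
    (hrep : IsRepetitionInvariant M) {m n : ℕ} (hn : 0 < n) (f : ℕ → ℝ) (hf : ∀ k, 0 < f k) :
    M (m * n) (fun i => f (i / n)) = M m (fun k => f k) :=
  hrep m n hn (fun k => f k) (fun k => hf k)

theorem stmt_4_general (M : ∀ n : ℕ, (Fin n → ℝ) → ℝ)
    (hhom : IsHomogeneousMean M) (hmono : IsMonotoneMean M)
    (hrep : IsRepetitionInvariant M)
    (d : ℕ → ℝ) (hd : ∀ n, d n = M n (fun k : Fin n => (n : ℝ) / ((k : ℕ) + 1)))
    (m n : ℕ) (hm : 0 < m) (hmn : m ≤ n) :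
    d m ≤ 2 * d n := by
  have hn : 0 < n := hm.trans_le hmn
  have harmonic_pos : ∀ p : ℕ, 0 < p → ∀ k : ℕ, (0 : ℝ) < p / (k + 1) :=
    fun p hp k => by positivity
  calc d m = M (m * n) (fun i => (m : ℝ) / ((i / n : ℕ) + 1)) := by
        rw [hd, hrep.apply_comp_div hn _ (harmonic_pos m hm)]
    _ ≤ M (m * n) (fun i => 2 * ((n : ℝ) / ((i / m : ℕ) + 1))) :=
        hmono _ _ _ (fun i => harmonic_pos m hm _) (fun i => div_div_add_one_le_two_mul hmn i)
    _ = 2 * M (m * n) (fun i => (n : ℝ) / ((i / m : ℕ) + 1)) :=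
        hhom 2 two_pos _ _ (fun i => harmonic_pos n hn _)
    _ = 2 * d n := by
        rw [Nat.mul_comm m n, hrep.apply_comp_div hm _ (harmonic_pos n hn), hd]

theorem stmt_4 (M : ∀ n : ℕ, (Fin n → ℝ) → ℝ)
    (hmean : IsMeanOn (Set.Ioi 0) M)
    (hhom : IsHomogeneousMean M) (hmono : IsMonotoneMean M)
    (hrep : IsRepetitionInvariant M)
    (d : ℕ → ℝ) (hd : ∀ n, d n = M n (fun k : Fin n => (n : ℝ) / ((k : ℕ) + 1)))
    (m n : ℕ) (hm : 0 < m) (hmn : m ≤ n) :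
    d m ≤ 2 * d n :=
  stmt_4_general M hhom hmono hrep d hd m n hm hmn
end

section
/- Let M be a homogeneous and monotone mean on (0,∞), and suppose there is a sequence (aₙ) of positive reals with: (1) Σ aₙ = +∞; (2) the sequence bₙ := M(a₁,…,aₙ)/aₙ is nearly increasing and tends to +∞; (3) Σ aₙ·bₙ^{−s} < +∞ for some s > 0. Then M is not a weak-Hardy mean; i.e., there exists a summable sequence (cₙ) of positive reals with Σₙ M(c₁,…,cₙ) = +∞. -/
/-! Put `cₙ := aₙ bₙ^{-r}`. Since `b` is nearly increasing, every entry of `(c₁, …, cₙ)` is at least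
`ε^r bₙ^{-r}` times the corresponding entry of `(a₁, …, aₙ)`, so monotonicity and homogeneity give
`M(c₁, …, cₙ) ≥ ε^r bₙ^{-r} M(a₁, …, aₙ) = ε^r aₙ bₙ^{1-r}`. It remains to choose `r > 0` with
`Σ aₙ bₙ^{-r} < ∞ = Σ aₙ bₙ^{1-r}`: starting from `r = s`, lower `r` by one as long as the second
series converges; this stops before `r ≤ 1`, because `bₙ ≥ 1` eventually and `Σ aₙ = ∞`. -/

open Filter

theorem IsMeanOn.pos {M : ∀ n : ℕ, (Fin n → ℝ) → ℝ} (hmean : IsMeanOn (Set.Ioi 0) M) {n : ℕ}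
    {a : Fin (n + 1) → ℝ} (ha : ∀ i, 0 < a i) : 0 < M (n + 1) a := by
  obtain ⟨i, hi⟩ := exists_eq_ciInf_of_finite (f := a)
  exact hi ▸ ha i |>.trans_le (hmean n a ha).1

theorem IsMonotoneMean.mul_rpow_neg_le {M : ∀ n : ℕ, (Fin n → ℝ) → ℝ}
    (hhom : IsHomogeneousMean M) (hmono : IsMonotoneMean M) {a b : ℕ → ℝ}
    (ha : ∀ n, 0 < a n) (hb : ∀ n, 0 < b n) {ε : ℝ} (hε : 0 < ε)
    (hεb : ∀ m n : ℕ, m ≤ n → ε * b m ≤ b n) {r : ℝ} (hr : 0 ≤ r) (n : ℕ) :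
    ε ^ r * b n ^ (-r) * M (n + 1) (fun k : Fin (n + 1) => a k) ≤
      M (n + 1) (fun k : Fin (n + 1) => a k * b k ^ (-r)) := by
  have ht : 0 < ε ^ r * b n ^ (-r) := by have := hb n; positivity
  have hle : ∀ k : Fin (n + 1), ε ^ r * b n ^ (-r) * a k ≤ a k * b k ^ (-r) := by
    intro k
    have hbk : b k ≤ b n / ε := by
      rw [le_div_iff₀' hε]
      exact hεb k n (Nat.lt_succ_iff.mp k.isLt)
    calc ε ^ r * b n ^ (-r) * a k = a k * (b n / ε) ^ (-r) := by
          rw [Real.div_rpow (hb n).le hε.le, Real.rpow_neg hε.le, div_inv_eq_mul]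
          ring
      _ ≤ a k * b k ^ (-r) :=
          mul_le_mul_of_nonneg_left (Real.rpow_le_rpow_of_nonpos (hb k) hbk (neg_nonpos.mpr hr))
            (ha k).le
  rw [← hhom _ ht _ _ fun k => ha k]
  exact hmono _ _ _ (fun k => mul_pos ht (ha k)) hle

theorem not_summable_mul_rpow {a b : ℕ → ℝ} (ha : ∀ n, 0 ≤ a n) (hb : ∀ᶠ n in atTop, 1 ≤ b n)
    (h : ¬Summable a) {t : ℝ} (ht : 0 ≤ t) : ¬Summable fun n => a n * b n ^ t := by
  refine fun hsum => h (hsum.of_norm_bounded_eventually_nat ?_)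
  filter_upwards [hb] with n hn
  rw [Real.norm_of_nonneg (ha n)]
  exact le_mul_of_one_le_right (ha n) (Real.one_le_rpow hn ht)

theorem exists_summable_mul_rpow_neg_not_summable {a b : ℕ → ℝ} (ha : ∀ n, 0 ≤ a n)
    (hb : ∀ᶠ n in atTop, 1 ≤ b n) (h : ¬Summable a) {s : ℝ} (hs : 0 < s)
    (hsum : Summable fun n => a n * b n ^ (-s)) :
    ∃ r : ℝ, 0 < r ∧ Summable (fun n => a n * b n ^ (-r)) ∧
      ¬Summable fun n => a n * b n ^ (1 - r) := by
  obtain ⟨k, hk⟩ : ∃ k : ℕ, s ≤ k := exists_nat_ge s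
  induction k generalizing s with
  | zero => exact absurd hk (by simpa using hs)
  | succ k ih =>
    by_cases hnext : Summable fun n => a n * b n ^ (1 - s)
    · have hs1 : 1 < s := by
        by_contra! hs1
        exact not_summable_mul_rpow ha hb h (sub_nonneg.mpr hs1) hnext
      refine ih (sub_pos.mpr hs1) ?_ (by push_cast at hk; linarith)
      simpa only [neg_sub] using hnext
    · exact ⟨s, hs, hsum, hnext⟩

theorem stmt_5 (M : ∀ n : ℕ, (Fin n → ℝ) → ℝ)
    (hmean : IsMeanOn (Set.Ioi 0) M)
    (hhom : IsHomogeneousMean M) (hmono : IsMonotoneMean M)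
    (a : ℕ → ℝ) (ha : ∀ n, 0 < a n)
    (b : ℕ → ℝ)
    (hb : ∀ n, b n = M (n + 1) (fun k : Fin (n + 1) => a (k : ℕ)) / a n)
    (h1 : ¬ Summable a)
    (h2 : ∃ ε : ℝ, 0 < ε ∧ ∀ m n : ℕ, m ≤ n → ε * b m ≤ b n)
    (h2' : Filter.Tendsto b Filter.atTop Filter.atTop)
    (h3 : ∃ s : ℝ, 0 < s ∧ Summable (fun n => a n * (b n) ^ (-s))) :
    ¬ IsWeakHardyMean (Set.Ioi 0) M ∧
      ∃ c : ℕ → ℝ, (∀ n, 0 < c n) ∧ Summable c ∧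
        ¬ Summable (fun n => M (n + 1) (fun k : Fin (n + 1) => c (k : ℕ))) := by
  obtain ⟨ε, hε, hεb⟩ := h2
  obtain ⟨s, hs, hsum⟩ := h3
  have hbpos : ∀ n, 0 < b n := fun n => hb n ▸ div_pos (hmean.pos fun _ => ha _) (ha n)
  obtain ⟨r, hr, hc, hdiv⟩ := exists_summable_mul_rpow_neg_not_summable (fun n => (ha n).le)
    (h2'.eventually_ge_atTop 1) h1 hs hsum
  have hcpos : ∀ n, 0 < a n * b n ^ (-r) := fun n => by have := hbpos n; have := ha n; positivity
  have hlower : ∀ n, ε ^ r * (a n * b n ^ (1 - r)) ≤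
      M (n + 1) (fun k : Fin (n + 1) => a k * b k ^ (-r)) := fun n => by
    have hMa : M (n + 1) (fun k : Fin (n + 1) => a k) = b n * a n := by
      rw [hb n, div_mul_cancel₀ _ (ha n).ne']
    calc ε ^ r * (a n * b n ^ (1 - r))
        = ε ^ r * b n ^ (-r) * M (n + 1) (fun k : Fin (n + 1) => a k) := by
          rw [hMa, sub_eq_neg_add, Real.rpow_add_one (hbpos n).ne']
          ring
      _ ≤ _ := hmono.mul_rpow_neg_le hhom ha hbpos hε hεb hr.le n
  have hnot : ¬Summable fun n => M (n + 1) (fun k : Fin (n + 1) => a k * b k ^ (-r)) :=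
    fun hM => hdiv <| (summable_mul_left_iff (by positivity : ε ^ r ≠ 0)).mp <|
      hM.of_nonneg_of_le (fun n => by have := hbpos n; have := ha n; positivity) hlower
  exact ⟨fun hWH => hnot (hWH _ hcpos hc), _, hcpos, hc, hnot⟩
end

section
/- Let M be a homogeneous, monotone, repetition invariant mean on (0,∞). If there exist constants C, D > 0 and n₀ ∈ ℕ such that M(1, 1/2, …, 1/n) ≥ C·(ln n)^D / n for all n ≥ n₀, then M is not a weak-Hardy mean. -/
/-!
Take `a k = 1 / ((k + 2) log (k + 2) ^ (1 + D))`, a summable Bertrand series. Since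
`a k ≥ t / (k + 1)` for `k ≤ n` with `t ≍ log n ^ -(1 + D)`, homogeneity and monotonicity give
`M(a 0, …, a n) ≥ t · M(1, 1/2, …, 1/(n+1)) ≳ 1 / (n log n)`, whose series diverges.
-/

open Real Filter

theorem Real.summable_inv_nat_mul_log_rpow_iff {p : ℝ} (hp : 0 ≤ p) :
    Summable (fun n : ℕ => ((n : ℝ) * log n ^ p)⁻¹) ↔ 1 < p := by
  have hantitone : ∀ᶠ n : ℕ in atTop,
      ((n + 1 : ℕ) * log (n + 1 : ℕ) ^ p)⁻¹ ≤ ((n : ℝ) * log n ^ p)⁻¹ := by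
    filter_upwards [eventually_ge_atTop 2] with n hn
    have hn' : (2 : ℝ) ≤ n := by exact_mod_cast hn
    have hlog : 0 < log n := log_pos (by linarith)
    gcongr <;> simp
  rw [← summable_condensed_iff_of_eventually_nonneg (Eventually.of_forall fun n => by positivity)
    hantitone]
  have hcondensed (k : ℕ) : (2 : ℝ) ^ k * ((2 ^ k : ℕ) * log (2 ^ k : ℕ) ^ p)⁻¹
      = (log 2 ^ p)⁻¹ * ((k : ℝ) ^ p)⁻¹ := by
    rw [Nat.cast_pow, Nat.cast_ofNat, log_pow, mul_rpow (Nat.cast_nonneg k) (log_nonneg one_le_two)]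
    field_simp
  simp_rw [hcondensed]
  rw [summable_mul_left_iff (inv_ne_zero (rpow_pos_of_pos (log_pos one_lt_two) p).ne'),
    summable_nat_rpow_inv]

theorem Real.not_summable_inv_nat_mul_log :
    ¬ Summable (fun n : ℕ => ((n : ℝ) * log n)⁻¹) := by
  simpa using (summable_inv_nat_mul_log_rpow_iff zero_le_one).not

theorem Real.log_add_one_le_two_mul_log {x : ℝ} (hx : 2 ≤ x) : log (x + 1) ≤ 2 * log x := by
  rw [← log_rpow (by linarith)]
  exact log_le_log (by linarith) (by norm_num; nlinarith)

theorem inv_two_mul_log_rpow_mul_one_div_le {p : ℝ} (hp : 0 ≤ p) {k n : ℕ} (hkn : k ≤ n) :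
    (2 * log ((n : ℝ) + 2) ^ p)⁻¹ * (1 / ((k : ℝ) + 1))
      ≤ (((k : ℝ) + 2) * log ((k : ℝ) + 2) ^ p)⁻¹ := by
  have hkn' : (k : ℝ) ≤ n := by exact_mod_cast hkn
  have hlog : 0 < log ((k : ℝ) + 2) := log_pos (by linarith [k.cast_nonneg (α := ℝ)])
  rw [← div_eq_mul_one_div, div_eq_inv_mul, ← mul_inv, ← mul_assoc]
  gcongr
  linarith

section Mean

variable {M : ∀ n : ℕ, (Fin n → ℝ) → ℝ}

theorem IsHomogeneousMean.mul_le_of_mul_le (hhom : IsHomogeneousMean M)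
    (hmono : IsMonotoneMean M) {n : ℕ} {t : ℝ} (ht : 0 < t) {a b : Fin n → ℝ}
    (hb : ∀ i, 0 < b i) (hba : ∀ i, t * b i ≤ a i) : t * M n b ≤ M n a := by
  rw [← hhom t ht n b hb]
  exact hmono n _ _ (fun i => mul_pos ht (hb i)) hba

theorem IsHomogeneousMean.inv_mul_log_le_of_harmonic_le (hhom : IsHomogeneousMean M)
    (hmono : IsMonotoneMean M) {C D : ℝ} (hC : 0 ≤ C) (hD : 0 ≤ D) {n : ℕ} (hn : 1 ≤ n)
    (hharmonic : C * log ((n : ℝ) + 1) ^ D / ((n : ℝ) + 1)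
      ≤ M (n + 1) (fun k : Fin (n + 1) => 1 / ((k : ℝ) + 1))) :
    C / (2 * 2 ^ (1 + D)) * (((n : ℝ) + 1) * log ((n : ℝ) + 1))⁻¹
      ≤ M (n + 1)
          (fun k : Fin (n + 1) => (((k : ℝ) + 2) * log ((k : ℝ) + 2) ^ (1 + D))⁻¹) := by
  set L := log ((n : ℝ) + 1)
  have hn' : (1 : ℝ) ≤ n := by exact_mod_cast hn
  have hL : 0 < L := log_pos (by linarith)
  have hlog : log ((n : ℝ) + 2) ≤ 2 * L := by
    simpa only [add_assoc, one_add_one_eq_two] using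
      log_add_one_le_two_mul_log (x := n + 1) (by linarith)
  have hlog_pos : 0 < log ((n : ℝ) + 2) := log_pos (by linarith)
  have ht : 0 < (2 * log ((n : ℝ) + 2) ^ (1 + D))⁻¹ := by positivity
  calc C / (2 * 2 ^ (1 + D)) * (((n : ℝ) + 1) * L)⁻¹
      = (2 * (2 * L) ^ (1 + D))⁻¹ * (C * L ^ D / ((n : ℝ) + 1)) := by
        rw [mul_rpow zero_le_two hL.le, rpow_add hL, rpow_one]
        field_simp
    _ ≤ (2 * log ((n : ℝ) + 2) ^ (1 + D))⁻¹ * (C * L ^ D / ((n : ℝ) + 1)) := by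
        gcongr
    _ ≤ (2 * log ((n : ℝ) + 2) ^ (1 + D))⁻¹
          * M (n + 1) (fun k : Fin (n + 1) => 1 / ((k : ℝ) + 1)) := by
        gcongr
    _ ≤ _ := hhom.mul_le_of_mul_le hmono ht (fun k => by positivity)
        fun k => inv_two_mul_log_rpow_mul_one_div_le (by positivity) (Nat.lt_succ_iff.mp k.isLt)

end Mean

theorem stmt_6_general (M : ∀ n : ℕ, (Fin n → ℝ) → ℝ)
    (hhom : IsHomogeneousMean M) (hmono : IsMonotoneMean M)
    (C D : ℝ) (hC : 0 < C) (hD : 0 < D) (n₀ : ℕ)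
    (hest : ∀ n : ℕ, n₀ ≤ n →
      C * (Real.log n) ^ D / n ≤ M n (fun k : Fin n => 1 / ((k : ℕ) + 1))) :
    ¬ IsWeakHardyMean (Set.Ioi 0) M := by
  intro hweak
  set a : ℕ → ℝ := fun k => (((k : ℝ) + 2) * log ((k : ℝ) + 2) ^ (1 + D))⁻¹
  have ha_pos (k : ℕ) : a k ∈ Set.Ioi 0 := by
    have : 0 < log ((k : ℝ) + 2) := log_pos (by linarith [k.cast_nonneg (α := ℝ)])
    exact Set.mem_Ioi.mpr (by positivity)
  have ha_summable : Summable a := by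
    have := (summable_nat_add_iff 2).mpr
      ((summable_inv_nat_mul_log_rpow_iff (by positivity)).mpr (by linarith : 1 < 1 + D))
    simpa only [Nat.cast_add, Nat.cast_ofNat] using this
  have hbound : ∀ᶠ n : ℕ in atTop,
      ‖C / (2 * 2 ^ (1 + D)) * (((n : ℝ) + 1) * log ((n : ℝ) + 1))⁻¹‖
        ≤ M (n + 1) (fun k : Fin (n + 1) => a k) := by
    filter_upwards [eventually_ge_atTop (max n₀ 1)] with n hn
    have hlog : 0 ≤ log ((n : ℝ) + 1) := log_nonneg (by linarith [n.cast_nonneg (α := ℝ)])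
    rw [Real.norm_of_nonneg (by positivity)]
    refine hhom.inv_mul_log_le_of_harmonic_le hmono hC.le hD.le (le_of_max_le_right hn) ?_
    simpa only [Nat.cast_add, Nat.cast_one] using hest (n + 1) (by omega)
  have hdiverges : ¬ Summable (fun n : ℕ => (((n : ℝ) + 1) * log ((n : ℝ) + 1))⁻¹) := by
    simpa only [Nat.cast_add, Nat.cast_one] using
      (summable_nat_add_iff 1).not.mpr not_summable_inv_nat_mul_log
  exact hdiverges ((summable_mul_left_iff (by positivity)).mp
    ((hweak a ha_pos ha_summable).of_norm_bounded_eventually_nat hbound))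

theorem stmt_6 (M : ∀ n : ℕ, (Fin n → ℝ) → ℝ)
    (hmean : IsMeanOn (Set.Ioi 0) M)
    (hhom : IsHomogeneousMean M) (hmono : IsMonotoneMean M)
    (hrep : IsRepetitionInvariant M)
    (C D : ℝ) (hC : 0 < C) (hD : 0 < D) (n₀ : ℕ)
    (hest : ∀ n : ℕ, n₀ ≤ n →
      C * (Real.log n) ^ D / n ≤ M n (fun k : Fin n => 1 / ((k : ℕ) + 1))) :
    ¬ IsWeakHardyMean (Set.Ioi 0) M :=
  stmt_6_general M hhom hmono C D hC hD n₀ hest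
end

section
/- For p ≠ q with p, q ∈ (0,1), and aₙ := 2^{1−n}, the Gini mean satisfies limₙ G_{p,q}(a₁,…,aₙ) = ((1−2^{−q})/(1−2^{−p}))^{1/(p−q)} > 0; consequently G_{p,q} is not a weak-Hardy mean. -/
open Finset in
/-- The Gini mean `G_{p,q}` of a tuple of positive reals. -/
noncomputable def gini (p q : ℝ) (n : ℕ) (a : Fin n → ℝ) : ℝ :=
  if p = q then
    Real.exp ((∑ i, a i ^ p * Real.log (a i)) / (∑ i, a i ^ p))
  else
    ((∑ i, a i ^ p) / (∑ i, a i ^ q)) ^ (1 / (p - q))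

/-! The powers `a n ^ r` of `a n = 2 ^ (-n)` form a geometric sequence of ratio `2 ^ (-r)`, so
both power sums in `G_{p,q}` converge to positive limits and `G_{p,q}(a₁,…,aₙ)` tends to a
positive number. A sequence of means with a positive limit is not summable, although `(aₙ)` is. -/

open Filter Topology

lemma tendsto_gini_of_hasSum {p q Sp Sq : ℝ} (hpq : p ≠ q) {a : ℕ → ℝ}
    (hp : HasSum (fun n => a n ^ p) Sp) (hq : HasSum (fun n => a n ^ q) Sq)
    (hSp : Sp ≠ 0) (hSq : Sq ≠ 0) :
    Tendsto (fun n => gini p q (n + 1) (fun k : Fin (n + 1) => a k)) atTop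
      (𝓝 ((Sp / Sq) ^ (1 / (p - q)))) := by
  have partial_sums : ∀ {r S : ℝ}, HasSum (fun n => a n ^ r) S →
      Tendsto (fun n => ∑ k : Fin (n + 1), a k ^ r) atTop (𝓝 S) := fun {r} _ h =>
    (h.tendsto_sum_nat.comp (tendsto_add_atTop_nat 1)).congr fun n =>
      (Fin.sum_univ_eq_sum_range (fun k => a k ^ r) (n + 1)).symm
  simp only [gini, if_neg hpq]
  exact ((partial_sums hp).div (partial_sums hq) hSq).rpow_const (Or.inl (div_ne_zero hSp hSq))

lemma rpow_neg_lt_one {x r : ℝ} (hx : 1 < x) (hr : 0 < r) : x ^ (-r) < 1 :=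
  Real.rpow_lt_one_of_one_lt_of_neg hx (neg_lt_zero.2 hr)

lemma hasSum_zpow_neg_rpow {x r : ℝ} (hx : 1 < x) (hr : 0 < r) :
    HasSum (fun n : ℕ => (x ^ (-(n : ℤ))) ^ r) (1 - x ^ (-r))⁻¹ := by
  have hx0 : 0 ≤ x := by linarith
  have geometric : ∀ n : ℕ, (x ^ (-(n : ℤ))) ^ r = (x ^ (-r)) ^ n := fun n => by
    rw [zpow_neg, zpow_natCast, Real.inv_rpow (by positivity), Real.rpow_neg hx0, inv_pow,
      ← Real.rpow_natCast, ← Real.rpow_natCast, ← Real.rpow_mul hx0, ← Real.rpow_mul hx0,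
      mul_comm]
  simp only [geometric]
  exact hasSum_geometric_of_lt_one (by positivity) (rpow_neg_lt_one hx hr)

theorem stmt_7 (p q : ℝ) (hp : p ∈ Set.Ioo (0:ℝ) 1) (hq : q ∈ Set.Ioo (0:ℝ) 1)
    (hpq : p ≠ q) (a : ℕ → ℝ) (ha : ∀ n, a n = (2 : ℝ) ^ (-(n : ℤ))) :
    Filter.Tendsto (fun n => gini p q (n + 1) (fun k : Fin (n + 1) => a (k : ℕ)))
      Filter.atTop
      (nhds (((1 - (2:ℝ) ^ (-q)) / (1 - (2:ℝ) ^ (-p))) ^ (1 / (p - q)))) ∧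
    0 < ((1 - (2:ℝ) ^ (-q)) / (1 - (2:ℝ) ^ (-p))) ^ (1 / (p - q)) ∧
    ∃ c : ℕ → ℝ, (∀ n, 0 < c n) ∧ Summable c ∧
      ¬ Summable (fun n => gini p q (n + 1) (fun k : Fin (n + 1) => c (k : ℕ))) := by
  have power_sum : ∀ r : ℝ, 0 < r → HasSum (fun n => a n ^ r) (1 - (2:ℝ) ^ (-r))⁻¹ :=
    fun r hr => by simpa only [ha] using hasSum_zpow_neg_rpow one_lt_two hr
  have hp' : 0 < 1 - (2:ℝ) ^ (-p) := sub_pos.2 (rpow_neg_lt_one one_lt_two hp.1)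
  have hq' : 0 < 1 - (2:ℝ) ^ (-q) := sub_pos.2 (rpow_neg_lt_one one_lt_two hq.1)
  have hlim := tendsto_gini_of_hasSum hpq (power_sum p hp.1) (power_sum q hq.1)
    (inv_ne_zero hp'.ne') (inv_ne_zero hq'.ne')
  rw [inv_div_inv] at hlim
  have hpos : 0 < ((1 - (2:ℝ) ^ (-q)) / (1 - (2:ℝ) ^ (-p))) ^ (1 / (p - q)) := by positivity
  refine ⟨hlim, hpos, a, fun n => by rw [ha]; positivity, ?_,
    fun hS => hpos.ne' (tendsto_nhds_unique hlim hS.tendsto_atTop_zero)⟩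
  simpa only [Real.rpow_one] using (power_sum 1 one_pos).summable
end

section
/- For every p ∈ (0,1) and all finite tuples of positive reals, G_{p,p}(a₁,…,aₙ) ≥ G_{p,p/2}(a₁,…,aₙ). -/
open Finset Real

lemma rpow_mul_log_le_of_pos {a c : ℝ} (ha : 0 < a) (hc : 0 < c) (p q : ℝ) :
    a ^ p * ((q - p) * log a + log c) ≤ c * a ^ q - a ^ p := by
  have hx : 0 < a ^ (q - p) * c := mul_pos (rpow_pos_of_pos ha _) hc
  have hlog : (q - p) * log a + log c = log (a ^ (q - p) * c) := by
    rw [log_mul (rpow_pos_of_pos ha _).ne' hc.ne', log_rpow ha]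
  have hpow : a ^ p * a ^ (q - p) = a ^ q := by
    rw [← rpow_add ha, add_sub_cancel]
  calc a ^ p * ((q - p) * log a + log c)
      ≤ a ^ p * (a ^ (q - p) * c - 1) := by
        rw [hlog]
        exact mul_le_mul_of_nonneg_left (log_le_sub_one_of_pos hx) (rpow_pos_of_pos ha p).le
    _ = c * a ^ q - a ^ p := by rw [← hpow]; ring

lemma sum_rpow_mul_log_sum_rpow_div_le {ι : Type*} [Fintype ι] [Nonempty ι] {a : ι → ℝ}
    (ha : ∀ i, 0 < a i) (p q : ℝ) :
    (∑ i, a i ^ p) * log ((∑ i, a i ^ p) / ∑ i, a i ^ q)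
      ≤ (p - q) * ∑ i, a i ^ p * log (a i) := by
  set S := ∑ i, a i ^ p
  set T := ∑ i, a i ^ q
  have hS : 0 < S := sum_pos (fun i _ => rpow_pos_of_pos (ha i) p) univ_nonempty
  have hT : 0 < T := sum_pos (fun i _ => rpow_pos_of_pos (ha i) q) univ_nonempty
  have hsum : ∑ i, a i ^ p * ((q - p) * log (a i) + log (S / T))
      ≤ ∑ i, (S / T * a i ^ q - a i ^ p) :=
    sum_le_sum fun i _ => rpow_mul_log_le_of_pos (ha i) (div_pos hS hT) p q
  have hlhs : ∑ i, a i ^ p * ((q - p) * log (a i) + log (S / T))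
      = (q - p) * ∑ i, a i ^ p * log (a i) + S * log (S / T) := by
    rw [mul_sum, show S * log (S / T) = ∑ i, a i ^ p * log (S / T) from sum_mul _ _ _,
      ← sum_add_distrib]
    exact sum_congr rfl fun i _ => by ring
  have hrhs : ∑ i, (S / T * a i ^ q - a i ^ p) = 0 := by
    rw [sum_sub_distrib, ← mul_sum, div_mul_cancel₀ S hT.ne', sub_self]
  linarith

theorem gini_le_gini_self {p q : ℝ} (hqp : q < p) (n : ℕ) [NeZero n] {a : Fin n → ℝ}
    (ha : ∀ i, 0 < a i) : gini p q n a ≤ gini p p n a := by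
  have hS : 0 < ∑ i, a i ^ p := sum_pos (fun i _ => rpow_pos_of_pos (ha i) p) univ_nonempty
  have hT : 0 < ∑ i, a i ^ q := sum_pos (fun i _ => rpow_pos_of_pos (ha i) q) univ_nonempty
  rw [gini, gini, if_neg hqp.ne', if_pos rfl, rpow_def_of_pos (div_pos hS hT), exp_le_exp,
    mul_one_div, div_le_div_iff₀ (sub_pos.mpr hqp) hS, mul_comm _ (p - q)]
  simpa only [mul_comm] using sum_rpow_mul_log_sum_rpow_div_le ha p q

theorem stmt_8 (p : ℝ) (hp : p ∈ Set.Ioo (0:ℝ) 1)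
    (n : ℕ) (a : Fin (n + 1) → ℝ) (ha : ∀ i, 0 < a i) :
    gini p (p / 2) (n + 1) a ≤ gini p p (n + 1) a :=
  gini_le_gini_self (half_lt_self hp.1) (n + 1) ha
end

section
/- Gini means are monotone in the parameters: if p ≤ p′ and q ≤ q′, then G_{p,q}(a) ≤ G_{p′,q′}(a) for every finite tuple a of positive reals. -/
/-!
With `F(t) = log ∑ aᵢ ^ t`, the logarithm of `G_{p,q}(a)` is the divided difference
`(F p - F q) / (p - q)`, and `F' p` when `p = q`. By Hölder's inequality `F` is convex, and the
divided difference of a differentiable convex function is monotone in each argument.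
-/

open Set

noncomputable def divDiff (f : ℝ → ℝ) (x y : ℝ) : ℝ :=
  if x = y then deriv f x else slope f y x

lemma divDiff_comm (f : ℝ → ℝ) (x y : ℝ) : divDiff f x y = divDiff f y x := by
  unfold divDiff
  split_ifs with h h' h'
  · rw [h]
  · exact absurd h.symm h'
  · exact absurd h'.symm h
  · exact slope_comm f y x

section Convex

variable {f : ℝ → ℝ} {S : Set ℝ}

lemma ConvexOn.divDiff_mono_left (hf : ConvexOn ℝ S f)
    (hd : ∀ x ∈ S, DifferentiableAt ℝ f x) {x x' y : ℝ} (hx : x ∈ S) (hx' : x' ∈ S)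
    (hy : y ∈ S) (hxx' : x ≤ x') : divDiff f x y ≤ divDiff f x' y := by
  rcases hxx'.eq_or_lt with rfl | hlt
  · rfl
  unfold divDiff
  split_ifs with h h' h'
  · exact absurd (h.trans h'.symm) hlt.ne
  · subst h
    exact hf.deriv_le_slope hx hx' hlt (hd x hx)
  · subst h'
    rw [slope_comm]
    exact hf.slope_le_deriv hx hx' hlt (hd x' hx')
  · exact hf.slope_mono hy ⟨hx, h⟩ ⟨hx', h'⟩ hxx'

lemma ConvexOn.divDiff_mono (hf : ConvexOn ℝ S f)
    (hd : ∀ x ∈ S, DifferentiableAt ℝ f x) {x x' y y' : ℝ} (hx : x ∈ S) (hx' : x' ∈ S)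
    (hy : y ∈ S) (hy' : y' ∈ S) (hxx' : x ≤ x') (hyy' : y ≤ y') :
    divDiff f x y ≤ divDiff f x' y' :=
  calc divDiff f x y ≤ divDiff f x' y := hf.divDiff_mono_left hd hx hx' hy hxx'
    _ = divDiff f y x' := divDiff_comm f x' y
    _ ≤ divDiff f y' x' := hf.divDiff_mono_left hd hy hy' hx' hyy'
    _ = divDiff f x' y' := divDiff_comm f y' x'

end Convex

section SumRpow

variable {ι : Type*} [Fintype ι] {a : ι → ℝ}

lemma sum_rpow_pos [Nonempty ι] (ha : ∀ i, 0 < a i) (t : ℝ) : 0 < ∑ i, a i ^ t :=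
  Finset.sum_pos (fun i _ => Real.rpow_pos_of_pos (ha i) t) Finset.univ_nonempty

/-- Hölder's inequality with exponents `1 / θ` and `1 / η`. -/
lemma sum_rpow_convexComb_le (ha : ∀ i, 0 < a i) {θ η : ℝ} (hθ : 0 < θ) (hη : 0 < η)
    (hθη : θ + η = 1) (x y : ℝ) :
    ∑ i, a i ^ (θ * x + η * y) ≤ (∑ i, a i ^ x) ^ θ * (∑ i, a i ^ y) ^ η := by
  have hconj : Real.HolderConjugate θ⁻¹ η⁻¹ := by
    rw [Real.holderConjugate_iff, inv_inv, inv_inv]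
    exact ⟨one_lt_inv₀ hθ |>.mpr (by linarith), hθη⟩
  have holder := Real.inner_le_Lp_mul_Lq_of_nonneg Finset.univ hconj
    (f := fun i => (a i ^ x) ^ θ) (g := fun i => (a i ^ y) ^ η)
    (fun i _ => (Real.rpow_pos_of_pos (Real.rpow_pos_of_pos (ha i) x) θ).le)
    (fun i _ => (Real.rpow_pos_of_pos (Real.rpow_pos_of_pos (ha i) y) η).le)
  have hsplit : ∀ i, a i ^ (θ * x + η * y) = (a i ^ x) ^ θ * (a i ^ y) ^ η := fun i => by
    rw [← Real.rpow_mul (ha i).le, ← Real.rpow_mul (ha i).le, ← Real.rpow_add (ha i),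
      mul_comm x, mul_comm y]
  have hunsplit : ∀ (s t : ℝ), 0 < s → ∀ i, ((a i ^ t) ^ s) ^ s⁻¹ = a i ^ t := fun s t hs i =>
    Real.rpow_rpow_inv (Real.rpow_pos_of_pos (ha i) t).le hs.ne'
  simp only [hunsplit θ x hθ, hunsplit η y hη, one_div, inv_inv] at holder
  simpa only [hsplit] using holder

lemma convexOn_log_sum_rpow [Nonempty ι] (ha : ∀ i, 0 < a i) :
    ConvexOn ℝ univ (fun t : ℝ => Real.log (∑ i, a i ^ t)) := by
  refine convexOn_iff_forall_pos.mpr ⟨convex_univ, fun x _ y _ θ η hθ hη hθη => ?_⟩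
  have hle := Real.log_le_log (sum_rpow_pos ha _) (sum_rpow_convexComb_le ha hθ hη hθη x y)
  rw [Real.log_mul (Real.rpow_pos_of_pos (sum_rpow_pos ha x) θ).ne'
      (Real.rpow_pos_of_pos (sum_rpow_pos ha y) η).ne',
    Real.log_rpow (sum_rpow_pos ha x), Real.log_rpow (sum_rpow_pos ha y)] at hle
  simpa only [smul_eq_mul] using hle

lemma hasDerivAt_log_sum_rpow [Nonempty ι] (ha : ∀ i, 0 < a i) (t : ℝ) :
    HasDerivAt (fun t : ℝ => Real.log (∑ i, a i ^ t))
      ((∑ i, a i ^ t * Real.log (a i)) / ∑ i, a i ^ t) t :=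
  (HasDerivAt.fun_sum fun i _ => (Real.hasStrictDerivAt_const_rpow (ha i) t).hasDerivAt).log
    (sum_rpow_pos ha t).ne'

end SumRpow

lemma gini_eq_exp_divDiff {n : ℕ} [NeZero n] {a : Fin n → ℝ} (ha : ∀ i, 0 < a i) (p q : ℝ) :
    gini p q n a = Real.exp (divDiff (fun t : ℝ => Real.log (∑ i, a i ^ t)) p q) := by
  unfold gini divDiff
  split_ifs with h
  · rw [(hasDerivAt_log_sum_rpow ha p).deriv]
  · rw [Real.rpow_def_of_pos (div_pos (sum_rpow_pos ha p) (sum_rpow_pos ha q)),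
      Real.log_div (sum_rpow_pos ha p).ne' (sum_rpow_pos ha q).ne', slope_def_field, mul_one_div]

theorem stmt_9 (p q p' q' : ℝ) (hp : p ≤ p') (hq : q ≤ q')
    (n : ℕ) (a : Fin (n + 1) → ℝ) (ha : ∀ i, 0 < a i) :
    gini p q (n + 1) a ≤ gini p' q' (n + 1) a := by
  rw [gini_eq_exp_divDiff ha, gini_eq_exp_divDiff ha]
  exact Real.exp_le_exp.mpr <| (convexOn_log_sum_rpow ha).divDiff_mono
    (fun t _ => (hasDerivAt_log_sum_rpow ha t).differentiableAt)
    (mem_univ p) (mem_univ p') (mem_univ q) (mem_univ q') hp hq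
end

section
/- Let I be an interval with inf I = 0 and f : I → ℝ continuous and strictly monotone. If there exists ε ∈ I such that the quasi-arithmetic mean A_f restricted to (0,ε) is a weak-Hardy mean, then A_f is a weak-Hardy mean on I. -/
/-
Let `a` be summable with values in `I`, eventually below `w < u < ε`, say from index `N` on.
Replacing `a₀, …, a_{N-1}` by `N + k` copies of `u` gives a summable sequence `b` in `(0, ε)`.
On the common tail the values of `f` stay below `f w < f u`, so once `k (f u - f w)` exceeds the
excess of `f a₀ + ⋯ + f a_{N-1}` over `N f w`, the `f`-averages satisfy
`A_f(a₀, …, aₙ) ≤ A_f(b₀, …, b_{n+k})` for all large `n`. Hence the means of `a` are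
dominated by a shift of the summable means of `b`. A decreasing `f` reduces to the increasing
`-f`, which generates the same mean.
-/

/-- The quasi-arithmetic mean generated by `f`, the inverse being taken on `I`. -/
noncomputable def qam (f : ℝ → ℝ) (I : Set ℝ) (n : ℕ) (a : Fin n → ℝ) : ℝ :=
  Function.invFunOn f I ((∑ i, f (a i)) / n)

open Finset Filter Set

lemma Set.OrdConnected.sum_div_card_mem {S : Set ℝ} (hS : S.OrdConnected) {n : ℕ} (hn : 0 < n)
    {y : Fin n → ℝ} (hy : ∀ i, y i ∈ S) : (∑ i, y i) / n ∈ S := by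
  have hw : ∑ _i : Fin n, (n : ℝ)⁻¹ = 1 := by simp [(Nat.cast_pos.mpr hn).ne']
  simpa [Finset.mul_sum, div_eq_inv_mul] using
    hS.convex.sum_mem (fun _ _ => by positivity) hw fun i _ => hy i

section qam

variable {f : ℝ → ℝ} {I : Set ℝ} {n : ℕ} {a : Fin n → ℝ}

lemma qam_mem_and_apply (hI : I.OrdConnected) (hf : ContinuousOn f I) (hn : 0 < n)
    (ha : ∀ i, a i ∈ I) : qam f I n a ∈ I ∧ f (qam f I n a) = (∑ i, f (a i)) / n := by
  have hmem : (∑ i, f (a i)) / n ∈ f '' I :=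
    (hI.isPreconnected.image f hf).ordConnected.sum_div_card_mem hn fun i =>
      mem_image_of_mem f (ha i)
  exact ⟨Function.invFunOn_mem hmem, Function.invFunOn_eq hmem⟩

lemma qam_neg (hI : I.OrdConnected) (hf : ContinuousOn f I) (hinj : InjOn f I) (hn : 0 < n)
    (ha : ∀ i, a i ∈ I) : qam (-f) I n a = qam f I n a := by
  obtain ⟨hmem, happly⟩ := qam_mem_and_apply hI hf hn ha
  obtain ⟨hmem', happly'⟩ := qam_mem_and_apply hI hf.neg hn ha
  refine hinj hmem' hmem ?_
  simp only [Pi.neg_apply, Finset.sum_neg_distrib, neg_div, neg_inj] at happly'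
  rw [happly', happly]

end qam

noncomputable def prefixMean (f : ℝ → ℝ) (I : Set ℝ) (a : ℕ → ℝ) (n : ℕ) : ℝ :=
  qam f I (n + 1) fun k : Fin (n + 1) => a k

def IsWeakHardyOn (f : ℝ → ℝ) (I S : Set ℝ) : Prop :=
  ∀ a : ℕ → ℝ, (∀ n, a n ∈ S) → Summable a → Summable (prefixMean f I a)

section prefixMean

variable {f : ℝ → ℝ} {I : Set ℝ} {a b : ℕ → ℝ}

lemma prefixMean_mem_and_apply (hI : I.OrdConnected) (hf : ContinuousOn f I)
    (ha : ∀ i, a i ∈ I) (n : ℕ) :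
    prefixMean f I a n ∈ I ∧
      f (prefixMean f I a n) = (∑ i ∈ range (n + 1), f (a i)) / (n + 1) := by
  have := qam_mem_and_apply hI hf n.succ_pos fun i : Fin (n + 1) => ha i
  rwa [Fin.sum_univ_eq_sum_range (fun i => f (a i)), Nat.cast_succ] at this

lemma prefixMean_neg (hI : I.OrdConnected) (hf : ContinuousOn f I) (hinj : InjOn f I)
    (ha : ∀ i, a i ∈ I) : prefixMean (-f) I a = prefixMean f I a :=
  funext fun n => qam_neg hI hf hinj n.succ_pos fun i => ha i

lemma StrictMonoOn.prefixMean_le_prefixMean (hI : I.OrdConnected) (hf : ContinuousOn f I)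
    (hm : StrictMonoOn f I) (ha : ∀ i, a i ∈ I) (hb : ∀ i, b i ∈ I) {n m : ℕ}
    (h : (∑ i ∈ range (n + 1), f (a i)) / (n + 1) ≤
      (∑ i ∈ range (m + 1), f (b i)) / (m + 1)) :
    prefixMean f I a n ≤ prefixMean f I b m := by
  obtain ⟨hamem, haapply⟩ := prefixMean_mem_and_apply hI hf ha n
  obtain ⟨hbmem, hbapply⟩ := prefixMean_mem_and_apply hI hf hb m
  rwa [← hm.le_iff_le hamem hbmem, haapply, hbapply]

lemma isWeakHardyOn_neg_iff {S : Set ℝ} (hI : I.OrdConnected) (hf : ContinuousOn f I)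
    (hinj : InjOn f I) (hS : S ⊆ I) : IsWeakHardyOn (-f) I S ↔ IsWeakHardyOn f I S :=
  forall_congr' fun a => forall_congr' fun ha => by
    rw [prefixMean_neg hI hf hinj fun i => hS (ha i)]

end prefixMean

def padSeq (a : ℕ → ℝ) (u : ℝ) (N k i : ℕ) : ℝ :=
  if i < N + k then u else a (i - k)

section padSeq

variable {a : ℕ → ℝ} {u : ℝ} {N k : ℕ}

lemma padSeq_mem {S : Set ℝ} (hu : u ∈ S) (ha : ∀ i ≥ N, a i ∈ S) (i : ℕ) :
    padSeq a u N k i ∈ S := by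
  unfold padSeq
  split_ifs with hi
  · exact hu
  · exact ha _ (by omega)

lemma summable_padSeq (ha : Summable a) : Summable (padSeq a u N k) := by
  rw [← summable_nat_add_iff (N + k)]
  convert (summable_nat_add_iff N).mpr ha using 2 with i
  simp only [padSeq, if_neg (by omega : ¬i + (N + k) < N + k)]
  congr 1
  omega

lemma sum_range_padSeq (g : ℝ → ℝ) {n : ℕ} (hn : N ≤ n) :
    ∑ i ∈ range (n + k), g (padSeq a u N k i) = (N + k) * g u + ∑ i ∈ Ico N n, g (a i) := by
  rw [← sum_range_add_sum_Ico _ (by omega : N + k ≤ n + k), ← sum_Ico_add']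
  congr 1
  · rw [sum_congr rfl fun i hi => by rw [padSeq, if_pos (mem_range.mp hi)], sum_const, card_range, nsmul_eq_mul, Nat.cast_add]
  · refine sum_congr rfl fun i hi => ?_
    rw [padSeq, if_neg (by simp at hi; omega), Nat.add_sub_cancel]

end padSeq

/-- `T` is the sum of `N` arbitrary values and `R` that of `p - N` values below `x`; on the right,
the first `N` values are replaced by `N + k` copies of `y > x`. -/
lemma avg_le_padded_avg {T R x y p k N : ℝ} (hp : 0 < p) (hk : 0 ≤ k) (hR : R ≤ (p - N) * x)
    (hpad : T - N * x + 1 ≤ (N + k) * (y - x)) (hlarge : (T - N * x) * k ≤ p) :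
    (T + R) / p ≤ ((N + k) * y + R) / (p + k) := by
  rw [div_le_div_iff₀ hp (by linarith)]
  nlinarith [mul_le_mul_of_nonneg_right hR hk, mul_le_mul_of_nonneg_right hpad hp.le]

lemma StrictMonoOn.exists_prefixMean_le_prefixMean_padSeq {f : ℝ → ℝ} {I : Set ℝ}
    (hI : I.OrdConnected) (hf : ContinuousOn f I) (hm : StrictMonoOn f I) {a : ℕ → ℝ}
    (ha : ∀ n, a n ∈ I) {w u : ℝ} (hw : w ∈ I) (hu : u ∈ I) (hwu : w < u) {N : ℕ}
    (hN : ∀ n ≥ N, a n < w) :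
    ∃ k, ∀ᶠ n in atTop, prefixMean f I a n ≤ prefixMean f I (padSeq a u N k) (n + k) := by
  set T := ∑ i ∈ range N, f (a i)
  have hgap : 0 < f u - f w := sub_pos.mpr (hm hw hu hwu)
  obtain ⟨k, hk⟩ := exists_nat_ge ((T - N * f w + 1) / (f u - f w))
  obtain ⟨M, hM⟩ := exists_nat_ge ((T - N * f w) * k)
  refine ⟨k, ?_⟩
  filter_upwards [eventually_ge_atTop N, eventually_ge_atTop M] with n hnN hnM
  refine hm.prefixMean_le_prefixMean hI hf ha (padSeq_mem hu fun i _ => ha _) ?_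
  rw [← sum_range_add_sum_Ico _ (by omega : N ≤ n + 1), add_right_comm n k 1,
    sum_range_padSeq f (by omega : N ≤ n + 1)]
  push_cast
  rw [add_right_comm (n : ℝ) k 1]
  refine avg_le_padded_avg (T := T) (x := f w)
    (by positivity) k.cast_nonneg ?_ ?_ (by linarith [(Nat.cast_le (α := ℝ)).mpr hnM])
  · calc ∑ i ∈ Ico N (n + 1), f (a i) ≤ ∑ _i ∈ Ico N (n + 1), f w :=
          sum_le_sum fun i hi => (hm (ha i) hw (hN i (mem_Ico.mp hi).1)).le
      _ = (n + 1 - N) * f w := by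
          rw [sum_const, Nat.card_Ico, nsmul_eq_mul, Nat.cast_sub (by omega)]; push_cast; ring
  · rw [div_le_iff₀ hgap] at hk
    nlinarith [N.cast_nonneg (α := ℝ)]

theorem StrictMonoOn.isWeakHardyOn {f : ℝ → ℝ} {I : Set ℝ} (hI : I.OrdConnected)
    (hIpos : I ⊆ Ioi 0) (hf : ContinuousOn f I) (hm : StrictMonoOn f I) {ε : ℝ} (hε : 0 < ε)
    (hsub : Ioo 0 ε ⊆ I) (hwh : IsWeakHardyOn f I (Ioo 0 ε)) : IsWeakHardyOn f I I := by
  intro a ha hsum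
  have hw : ε / 3 ∈ Ioo 0 ε := ⟨by positivity, by linarith⟩
  have hu : ε / 2 ∈ Ioo 0 ε := ⟨by positivity, by linarith⟩
  obtain ⟨N, hN⟩ : ∃ N, ∀ n ≥ N, a n < ε / 3 :=
    eventually_atTop.mp (hsum.tendsto_atTop_zero.eventually (gt_mem_nhds hw.1))
  obtain ⟨k, hk⟩ := hm.exists_prefixMean_le_prefixMean_padSeq hI hf ha (hsub hw) (hsub hu)
    (by linarith) hN
  have hpad : Summable (prefixMean f I (padSeq a (ε / 2) N k)) :=
    hwh _ (padSeq_mem hu fun i hi => ⟨hIpos (ha i), (hN i hi).trans hw.2⟩)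
      (summable_padSeq hsum)
  refine ((summable_nat_add_iff k).mpr hpad).of_norm_bounded_eventually_nat ?_
  filter_upwards [hk] with n hn
  rwa [Real.norm_of_nonneg (hIpos (prefixMean_mem_and_apply hI hf ha n).1).le]

lemma Set.OrdConnected.Ioo_csInf_subset {I : Set ℝ} (hI : I.OrdConnected) (hbdd : BddBelow I)
    {x : ℝ} (hx : x ∈ I) : Ioo (sInf I) x ⊆ I := fun _ hy =>
  let ⟨_, hv, hvy⟩ := (csInf_lt_iff hbdd ⟨x, hx⟩).mp hy.1
  hI.out hv hx ⟨hvy.le, hy.2.le⟩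

theorem stmt_12_general (I : Set ℝ) (hconn : I.OrdConnected)
    (hIpos : I ⊆ Set.Ioi 0) (hInf : sInf I = 0)
    (f : ℝ → ℝ) (hf : ContinuousOn f I)
    (hmono : StrictMonoOn f I ∨ StrictAntiOn f I)
    (ε : ℝ) (hε : ε ∈ I)
    (hwh : ∀ a : ℕ → ℝ, (∀ n, a n ∈ Set.Ioo (0:ℝ) ε) → Summable a →
      Summable (fun n => qam f I (n + 1) (fun k : Fin (n + 1) => a (k : ℕ)))) :
    ∀ a : ℕ → ℝ, (∀ n, a n ∈ I) → Summable a →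
      Summable (fun n => qam f I (n + 1) (fun k : Fin (n + 1) => a (k : ℕ))) := by
  change IsWeakHardyOn f I (Ioo 0 ε) at hwh
  show IsWeakHardyOn f I I
  have hbdd : BddBelow I := ⟨0, fun x hx => (hIpos hx).le⟩
  have hsub : Ioo 0 ε ⊆ I := hInf ▸ hconn.Ioo_csInf_subset hbdd hε
  rcases hmono with hm | hanti
  · exact hm.isWeakHardyOn hconn hIpos hf (hIpos hε) hsub hwh
  · rw [← isWeakHardyOn_neg_iff hconn hf hanti.injOn subset_rfl]
    exact hanti.neg.isWeakHardyOn hconn hIpos hf.neg (hIpos hε) hsub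
      ((isWeakHardyOn_neg_iff hconn hf hanti.injOn hsub).mpr hwh)

theorem stmt_12 (I : Set ℝ) (hne : I.Nonempty) (hconn : I.OrdConnected)
    (hIpos : I ⊆ Set.Ioi 0) (hInf : sInf I = 0)
    (f : ℝ → ℝ) (hf : ContinuousOn f I)
    (hmono : StrictMonoOn f I ∨ StrictAntiOn f I)
    (ε : ℝ) (hε : ε ∈ I)
    (hwh : ∀ a : ℕ → ℝ, (∀ n, a n ∈ Set.Ioo (0:ℝ) ε) → Summable a →
      Summable (fun n => qam f I (n + 1) (fun k : Fin (n + 1) => a (k : ℕ)))) :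
    ∀ a : ℕ → ℝ, (∀ n, a n ∈ I) → Summable a →
      Summable (fun n => qam f I (n + 1) (fun k : Fin (n + 1) => a (k : ℕ))) :=
  stmt_12_general I hconn hIpos hInf f hf hmono ε hε hwh
end

section
/- Let I be an interval with inf I = 0 and f : I → ℝ continuous strictly monotone. If there exists ε ∈ I such that A_f restricted to (0,ε) is a Hardy mean, then for every s ∈ I, A_f restricted to (0,s) is also a Hardy mean, with Hardy constant at most max(H(A_f|_{(0,ε)}), (1 + s/ε)·c_f(s)) where c_f is the function from the localized Hardy bound. -/
open Set

section LinearOrderedField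

variable {𝕜 : Type*} [Field 𝕜] [LinearOrder 𝕜] [IsStrictOrderedRing 𝕜]

theorem Convex.sum_div_card_mem {ι : Type*} [Fintype ι] [Nonempty ι] {s : Set 𝕜}
    (hs : Convex 𝕜 s) {z : ι → 𝕜} (hz : ∀ i, z i ∈ s) : (∑ i, z i) / Fintype.card ι ∈ s := by
  have h := hs.centerMass_mem (t := Finset.univ) (w := fun _ => (1 : 𝕜)) (z := z)
    (fun _ _ => zero_le_one) (by simp [Fintype.card_pos]) (fun i _ => hz i)
  simpa [Finset.centerMass, div_eq_inv_mul] using h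

theorem add_div_add_one_mem_uIcc {x S m : 𝕜} (hm : 0 < m) :
    (x + S) / (m + 1) ∈ uIcc (S / m) x := by
  refine segment_subset_uIcc (𝕜 := 𝕜) _ _
    ⟨m / (m + 1), 1 / (m + 1), by positivity, by positivity, ?_, ?_⟩
  · field_simp
  · simp only [smul_eq_mul]
    field_simp
    ring

end LinearOrderedField

theorem Set.OrdConnected.Ioc_csInf_subset {α : Type*} [ConditionallyCompleteLinearOrder α]
    {I : Set α} (hI : I.OrdConnected) {s : α} (hs : s ∈ I) : Ioc (sInf I) s ⊆ I := by
  intro x hx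
  obtain ⟨y, hy, hyx⟩ := exists_lt_of_csInf_lt ⟨s, hs⟩ hx.1
  exact hI.out hy hs ⟨hyx.le, hx.2⟩

theorem le_of_map_mem_uIcc {α β : Type*} [LinearOrder α] [LinearOrder β] {f : α → β}
    {I : Set α} (hf : StrictMonoOn f I ∨ StrictAntiOn f I) {x y z : α}
    (hx : x ∈ I) (hy : y ∈ I) (hz : z ∈ I) (hxz : x ≤ z)
    (hfy : f y ∈ uIcc (f x) (f z)) : x ≤ y := by
  rcases hf with hf | hf
  · rw [uIcc_of_le (hf.monotoneOn hx hz hxz)] at hfy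
    exact (hf.le_iff_le hx hy).1 hfy.1
  · rw [uIcc_of_ge (hf.antitoneOn hx hz hxz)] at hfy
    exact (hf.le_iff_ge hy hx).1 hfy.2

section QuasiArithmeticMean

variable {f : ℝ → ℝ} {I J : Set ℝ} {n : ℕ} {a : Fin (n + 1) → ℝ}

theorem mean_mem_image (hJ : J.OrdConnected) (hf : ContinuousOn f J) (ha : ∀ i, a i ∈ J) :
    (∑ i, f (a i)) / (n + 1 : ℕ) ∈ f '' J := by
  have hconv : Convex ℝ (f '' J) := (hJ.isPreconnected.image f hf).ordConnected.convex
  simpa using hconv.sum_div_card_mem fun i => mem_image_of_mem f (ha i)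

theorem map_qam (hI : I.OrdConnected) (hf : ContinuousOn f I) (ha : ∀ i, a i ∈ I) :
    f (qam f I (n + 1) a) = (∑ i, f (a i)) / (n + 1 : ℕ) :=
  Function.invFunOn_eq (mean_mem_image hI hf ha)

theorem qam_mem (hinj : InjOn f I) (hJI : J ⊆ I) (hJ : J.OrdConnected) (hf : ContinuousOn f J)
    (ha : ∀ i, a i ∈ J) : qam f I (n + 1) a ∈ J := by
  obtain ⟨x, hx, hfx⟩ := mean_mem_image hJ hf ha
  rwa [qam, ← hfx, hinj.leftInvOn_invFunOn (hJI hx)]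

theorem qam_le_qam_cons (hI : I.OrdConnected) (hf : ContinuousOn f I)
    (hmono : StrictMonoOn f I ∨ StrictAntiOn f I) {s : ℝ} (hs : s ∈ I) (ha : ∀ i, a i ∈ I)
    (has : ∀ i, a i ≤ s) : qam f I (n + 1) a ≤ qam f I (n + 2) (Fin.cons s a) := by
  have hinj : InjOn f I := hmono.elim StrictMonoOn.injOn StrictAntiOn.injOn
  have hcons : ∀ i, (Fin.cons s a : Fin (n + 2) → ℝ) i ∈ I := Fin.cases hs ha
  have hqam_le : qam f I (n + 1) a ≤ s :=
    (qam_mem hinj inter_subset_left (hI.inter ordConnected_Iic) (hf.mono inter_subset_left)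
      fun i => ⟨ha i, has i⟩).2
  refine le_of_map_mem_uIcc hmono (qam_mem hinj subset_rfl hI hf ha)
    (qam_mem hinj subset_rfl hI hf hcons) hs hqam_le ?_
  rw [map_qam hI hf hcons, map_qam hI hf ha, Fin.sum_univ_succ (n := n + 1)]
  simp only [Fin.cons_zero, Fin.cons_succ]
  push_cast
  exact add_div_add_one_mem_uIcc (by positivity)

end QuasiArithmeticMean

section Prepend

variable {α : Type*}

def prepend (x : α) (a : ℕ → α) : ℕ → α
  | 0 => x
  | n + 1 => a n

theorem forall_prepend {p : α → Prop} {x : α} {a : ℕ → α} :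
    (∀ n, p (prepend x a n)) ↔ p x ∧ ∀ n, p (a n) :=
  ⟨fun h => ⟨h 0, fun n => h (n + 1)⟩, fun ⟨hx, ha⟩ n => n.casesOn hx ha⟩

theorem ciSup_prepend [ConditionallyCompleteLattice α] {x : α} {a : ℕ → α} (hax : ∀ n, a n ≤ x) :
    ⨆ n, prepend x a n = x :=
  have hle : ∀ n, prepend x a n ≤ x := forall_prepend (p := (· ≤ x)).2 ⟨le_rfl, hax⟩
  le_antisymm (ciSup_le hle) (le_ciSup (f := prepend x a) ⟨x, forall_mem_range.2 hle⟩ 0)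

variable [AddCommGroup α] [TopologicalSpace α] [IsTopologicalAddGroup α] {x : α} {a : ℕ → α}

theorem summable_prepend_iff : Summable (prepend x a) ↔ Summable a :=
  (summable_nat_add_iff 1).symm

theorem tsum_prepend [T2Space α] (ha : Summable a) : ∑' n, prepend x a n = x + ∑' n, a n :=
  (summable_prepend_iff.2 ha).tsum_eq_zero_add

end Prepend

-- `qamPrefix f I a n = A_f(a₀, …, aₙ)`, a mean of `n + 1` terms.
noncomputable def qamPrefix (f : ℝ → ℝ) (I : Set ℝ) (a : ℕ → ℝ) (n : ℕ) : ℝ :=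
  qam f I (n + 1) fun k : Fin (n + 1) => a k

section Hardy

variable {f : ℝ → ℝ} {I : Set ℝ} {a : ℕ → ℝ} {s : ℝ}

theorem qamPrefix_le_qamPrefix_prepend (hI : I.OrdConnected) (hf : ContinuousOn f I)
    (hmono : StrictMonoOn f I ∨ StrictAntiOn f I) (hs : s ∈ I) (ha : ∀ n, a n ∈ I)
    (has : ∀ n, a n ≤ s) (n : ℕ) : qamPrefix f I a n ≤ qamPrefix f I (prepend s a) (n + 1) := by
  have hcons : (fun k : Fin (n + 2) => prepend s a k) = Fin.cons s fun k : Fin (n + 1) => a k :=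
    funext (Fin.cases rfl fun _ => rfl)
  rw [qamPrefix, qamPrefix, hcons]
  exact qam_le_qam_cons hI hf hmono hs (fun i => ha i) fun i => has i

theorem tsum_qamPrefix_le_tsum_qamPrefix_prepend (hI : I.OrdConnected) (hI0 : I ⊆ Ici 0)
    (hf : ContinuousOn f I) (hmono : StrictMonoOn f I ∨ StrictAntiOn f I) (hs : s ∈ I)
    (ha : ∀ n, a n ∈ I) (has : ∀ n, a n ≤ s) (hsum : Summable (qamPrefix f I (prepend s a))) :
    Summable (qamPrefix f I a) ∧ ∑' n, qamPrefix f I a n ≤ ∑' n, qamPrefix f I (prepend s a) n := by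
  have hinj : InjOn f I := hmono.elim StrictMonoOn.injOn StrictAntiOn.injOn
  have hnonneg : ∀ {b : ℕ → ℝ}, (∀ n, b n ∈ I) → ∀ n, 0 ≤ qamPrefix f I b n :=
    fun hb n => hI0 (qam_mem hinj subset_rfl hI hf fun i => hb i)
  have hle := qamPrefix_le_qamPrefix_prepend hI hf hmono hs ha has
  have hsum_succ : Summable fun n => qamPrefix f I (prepend s a) (n + 1) :=
    (summable_nat_add_iff 1).2 hsum
  have hsum_a : Summable (qamPrefix f I a) := hsum_succ.of_nonneg_of_le (hnonneg ha) hle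
  refine ⟨hsum_a, (hsum_a.tsum_le_tsum hle hsum_succ).trans ?_⟩
  rw [hsum.tsum_eq_zero_add]
  exact le_add_of_nonneg_left (hnonneg (forall_prepend.2 ⟨hs, ha⟩) 0)

end Hardy

theorem stmt_14_general (I : Set ℝ) (hconn : I.OrdConnected)
    (hIpos : I ⊆ Set.Ioi 0) (hInf : sInf I = 0)
    (f : ℝ → ℝ) (hf : ContinuousOn f I)
    (hmono : StrictMonoOn f I ∨ StrictAntiOn f I)
    (ε : ℝ) (hε : ε ∈ I)
    (Hε : ℝ)
    (hH : ∀ a : ℕ → ℝ, (∀ n, a n ∈ Set.Ioo (0:ℝ) ε) → Summable a →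
      Summable (fun n => qam f I (n + 1) (fun k : Fin (n + 1) => a (k : ℕ))) ∧
      ∑' n, qam f I (n + 1) (fun k : Fin (n + 1) => a (k : ℕ)) ≤ Hε * ∑' n, a n)
    (c : ℝ → ℝ) (hcpos : ∀ x ∈ I, 0 < c x)
    (hc : ∀ a : ℕ → ℝ, (∀ n, a n ∈ I) → Summable a →
      Summable (fun n => qam f I (n + 1) (fun k : Fin (n + 1) => a (k : ℕ))) ∧
      ∑' n, qam f I (n + 1) (fun k : Fin (n + 1) => a (k : ℕ)) ≤
        c (⨆ n, a n) * ∑' n, a n) :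
    ∀ s ∈ I, ∀ a : ℕ → ℝ, (∀ n, a n ∈ Set.Ioo (0:ℝ) s) → Summable a →
      Summable (fun n => qam f I (n + 1) (fun k : Fin (n + 1) => a (k : ℕ))) ∧
      ∑' n, qam f I (n + 1) (fun k : Fin (n + 1) => a (k : ℕ)) ≤
        max Hε ((1 + s / ε) * c s) * ∑' n, a n := by
  intro s hs a ha hsum
  have hsum_nonneg : 0 ≤ ∑' n, a n := tsum_nonneg fun n => (ha n).1.le
  by_cases hsmall : ∀ n, a n < ε
  · obtain ⟨hQ, hQ_le⟩ := hH a (fun n => ⟨(ha n).1, hsmall n⟩) hsum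
    exact ⟨hQ, hQ_le.trans (mul_le_mul_of_nonneg_right (le_max_left _ _) hsum_nonneg)⟩
  obtain ⟨k, hk⟩ := not_forall.1 hsmall
  have hε_le : ε ≤ ∑' n, a n := (not_lt.1 hk).trans (hsum.le_tsum k fun n _ => (ha n).1.le)
  have haI : ∀ n, a n ∈ I := fun n =>
    hconn.Ioc_csInf_subset hs (hInf ▸ ⟨(ha n).1, (ha n).2.le⟩)
  have has : ∀ n, a n ≤ s := fun n => (ha n).2.le
  obtain ⟨hQb, hQb_le⟩ :=
    hc (prepend s a) (forall_prepend.2 ⟨hs, haI⟩) (summable_prepend_iff.2 hsum)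
  obtain ⟨hQa, hQa_le⟩ := tsum_qamPrefix_le_tsum_qamPrefix_prepend hconn
    (hIpos.trans Ioi_subset_Ici_self) hf hmono hs haI has hQb
  have hs_le : s ≤ s / ε * ∑' n, a n := by
    rw [div_mul_eq_mul_div, le_div_iff₀ (hIpos hε)]
    exact mul_le_mul_of_nonneg_left hε_le (hIpos hs).le
  refine ⟨hQa, ?_⟩
  calc ∑' n, qamPrefix f I a n
      ≤ c (⨆ n, prepend s a n) * ∑' n, prepend s a n := hQa_le.trans hQb_le
    _ = c s * (s + ∑' n, a n) := by rw [ciSup_prepend has, tsum_prepend hsum]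
    _ ≤ (1 + s / ε) * c s * ∑' n, a n := by nlinarith [hcpos s hs]
    _ ≤ max Hε ((1 + s / ε) * c s) * ∑' n, a n :=
      mul_le_mul_of_nonneg_right (le_max_right _ _) hsum_nonneg

theorem stmt_14 (I : Set ℝ) (hne : I.Nonempty) (hconn : I.OrdConnected)
    (hIpos : I ⊆ Set.Ioi 0) (hInf : sInf I = 0)
    (f : ℝ → ℝ) (hf : ContinuousOn f I)
    (hmono : StrictMonoOn f I ∨ StrictAntiOn f I)
    (ε : ℝ) (hε : ε ∈ I)
    (Hε : ℝ)
    (hH : ∀ a : ℕ → ℝ, (∀ n, a n ∈ Set.Ioo (0:ℝ) ε) → Summable a →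
      Summable (fun n => qam f I (n + 1) (fun k : Fin (n + 1) => a (k : ℕ))) ∧
      ∑' n, qam f I (n + 1) (fun k : Fin (n + 1) => a (k : ℕ)) ≤ Hε * ∑' n, a n)
    (c : ℝ → ℝ) (hcpos : ∀ x ∈ I, 0 < c x)
    (hc : ∀ a : ℕ → ℝ, (∀ n, a n ∈ I) → Summable a →
      Summable (fun n => qam f I (n + 1) (fun k : Fin (n + 1) => a (k : ℕ))) ∧
      ∑' n, qam f I (n + 1) (fun k : Fin (n + 1) => a (k : ℕ)) ≤
        c (⨆ n, a n) * ∑' n, a n) :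
    ∀ s ∈ I, ∀ a : ℕ → ℝ, (∀ n, a n ∈ Set.Ioo (0:ℝ) s) → Summable a →
      Summable (fun n => qam f I (n + 1) (fun k : Fin (n + 1) => a (k : ℕ))) ∧
      ∑' n, qam f I (n + 1) (fun k : Fin (n + 1) => a (k : ℕ)) ≤
        max Hε ((1 + s / ε) * c s) * ∑' n, a n :=
  stmt_14_general I hconn hIpos hInf f hf hmono ε hε Hε hH c hcpos hc
end

section
/- Define f : (0,∞) → ℝ by f(x) = ln x for x ∈ (0,1] and f(x) = x−1 for x > 1. Then the quasi-arithmetic mean A_f is a weak-Hardy mean but not a Hardy mean. -/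
/-- The specific generator: `f x = ln x` on `(0,1]` and `f x = x - 1` on `(1,∞)`. -/
noncomputable def fExa : ℝ → ℝ := fun x => if x ≤ 1 then Real.log x else x - 1

open Finset Real
open scoped Nat

lemma exp_sum_log_div_card_le {ι : Type*} {s : Finset ι} (hs : s.Nonempty) {z : ι → ℝ}
    (hz : ∀ i ∈ s, 0 < z i) :
    exp ((∑ i ∈ s, log (z i)) / #s) ≤ (∑ i ∈ s, z i) / #s := by
  have hcard : (0 : ℝ) < #s := by exact_mod_cast hs.card_pos
  have h := geom_mean_le_arith_mean s (fun _ => 1) z (fun _ _ => zero_le_one)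
    (by simpa using hcard) (fun i hi => (hz i hi).le)
  simp only [rpow_one, sum_const, nsmul_eq_mul, mul_one, one_mul] at h
  rwa [rpow_def_of_pos (prod_pos hz), log_prod (fun i hi => (hz i hi).ne'), ← div_eq_mul_inv] at h

lemma mul_log_sub_one_le_log_factorial (m : ℕ) : m * (log m - 1) ≤ log m ! := by
  rcases Nat.eq_zero_or_pos m with rfl | hm
  · simp
  have h := pow_div_factorial_le_exp (m : ℝ) m.cast_nonneg m
  rw [div_le_iff₀ (by positivity), ← log_le_log_iff (by positivity) (by positivity), log_pow,
    log_mul (by positivity) (by positivity), log_exp] at h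
  linarith

lemma exp_sum_log_div_le (a : ℕ → ℝ) (ha : ∀ k, 0 < a k) {m : ℕ} (hm : m ≠ 0) :
    exp ((∑ k ∈ range m, log (a k)) / m) ≤ exp 1 * (∑ k ∈ range m, (k + 1) * a k) / m ^ 2 := by
  have hm0 : (0 : ℝ) < m := by positivity
  have hsplit : ∑ k ∈ range m, log ((k + 1) * a k) = log m ! + ∑ k ∈ range m, log (a k) := by
    rw [sum_congr rfl fun k _ => log_mul (by positivity) (ha k).ne', sum_add_distrib,
      ← log_prod (fun k _ => by positivity), ← prod_range_add_one_eq_factorial]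
    push_cast; rfl
  have amgm := exp_sum_log_div_card_le (s := range m) (z := fun k => (k + 1) * a k)
    (nonempty_range_iff.2 hm) (fun k _ => mul_pos (by positivity) (ha k))
  have hfac : exp (-log m ! / m) ≤ exp 1 / m := by
    rw [← exp_log hm0, ← exp_sub, exp_log hm0]
    gcongr
    rw [div_le_iff₀ hm0]
    nlinarith [mul_log_sub_one_le_log_factorial m]
  simp only [card_range] at amgm
  calc exp ((∑ k ∈ range m, log (a k)) / m)
      = exp ((∑ k ∈ range m, log ((k + 1) * a k)) / m) * exp (-log m ! / m) := by
        rw [← exp_add, hsplit]; ring_nf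
    _ ≤ (∑ k ∈ range m, (k + 1) * a k) / m * (exp 1 / m) :=
        mul_le_mul amgm hfac (exp_pos _).le
          (div_nonneg (sum_nonneg fun k _ => (mul_pos (by positivity) (ha k)).le) hm0.le)
    _ = exp 1 * (∑ k ∈ range m, (k + 1) * a k) / m ^ 2 := by ring

lemma summable_sum_range_mul_sub {c t : ℕ → ℝ} (hc : ∀ n, 0 ≤ c n) (ht : Antitone t)
    (ht0 : ∀ n, 0 ≤ t n) (hct : Summable fun n => c n * t n) :
    Summable fun n => (∑ k ∈ range (n + 1), c k) * (t n - t (n + 1)) := by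
  have by_parts : ∀ N, ∑ n ∈ range N, (∑ k ∈ range (n + 1), c k) * (t n - t (n + 1)) +
      (∑ k ∈ range N, c k) * t N = ∑ n ∈ range N, c n * t n := by
    intro N
    induction N with
    | zero => simp
    | succ N ih =>
      rw [sum_range_succ, sum_range_succ (fun n => c n * t n), ← ih, sum_range_succ c]
      ring
  refine summable_of_sum_range_le (c := ∑' n, c n * t n)
    (fun n => mul_nonneg (sum_nonneg fun k _ => hc k) (sub_nonneg.2 (ht n.le_succ))) fun N => ?_
  have hrest : 0 ≤ (∑ k ∈ range N, c k) * t N := mul_nonneg (sum_nonneg fun k _ => hc k) (ht0 N)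
  have htsum := hct.sum_le_tsum (range N) fun n _ => mul_nonneg (hc n) (ht0 n)
  linarith [by_parts N]

theorem summable_exp_sum_log_div {a : ℕ → ℝ} (ha : ∀ k, 0 < a k) (hs : Summable a) :
    Summable fun n : ℕ => exp ((∑ k ∈ range (n + 1), log (a k)) / (n + 1)) := by
  have hbound := summable_sum_range_mul_sub (c := fun k : ℕ => (k + 1) * a k)
    (t := fun k : ℕ => 1 / ((k : ℝ) + 1)) (fun k => by have := ha k; positivity)
    (fun i j hij => by dsimp only; gcongr) (fun k => by positivity)
    (hs.congr fun k => by field_simp)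
  refine Summable.of_nonneg_of_le (fun n => (exp_pos _).le) (fun n => ?_)
    (hbound.mul_left (2 * exp 1))
  have hS : 0 ≤ ∑ k ∈ range (n + 1), ((k : ℝ) + 1) * a k :=
    sum_nonneg fun k _ => by have := ha k; positivity
  have hweight : 1 / ((n : ℝ) + 1) ^ 2 ≤ 2 * (1 / ((n : ℝ) + 1) - 1 / ((n + 1 : ℕ) + 1)) := by
    push_cast
    rw [div_sub_div _ _ (by positivity) (by positivity), div_le_iff₀ (by positivity)]
    field_simp
    linarith
  calc exp ((∑ k ∈ range (n + 1), log (a k)) / (n + 1))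
      ≤ exp 1 * (∑ k ∈ range (n + 1), ((k : ℝ) + 1) * a k) / ((n : ℝ) + 1) ^ 2 := by
        simpa using exp_sum_log_div_le a ha n.succ_ne_zero
    _ = exp 1 * (∑ k ∈ range (n + 1), ((k : ℝ) + 1) * a k) * (1 / ((n : ℝ) + 1) ^ 2) := by ring
    _ ≤ exp 1 * (∑ k ∈ range (n + 1), ((k : ℝ) + 1) * a k) *
          (2 * (1 / ((n : ℝ) + 1) - 1 / ((n + 1 : ℕ) + 1))) := by gcongr
    _ = _ := by ring

lemma qam_eq_of_rightInverse {f g : ℝ → ℝ} {I : Set ℝ} (hf : Set.InjOn f I)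
    (hgI : ∀ y, g y ∈ I) (hfg : Function.RightInverse g f) (n : ℕ) (a : Fin n → ℝ) :
    qam f I n a = g ((∑ i, f (a i)) / n) := by
  have hex : ∃ x ∈ I, f x = (∑ i, f (a i)) / n := ⟨_, hgI _, hfg _⟩
  exact hf (Function.invFunOn_mem hex) (hgI _) (by rw [Function.invFunOn_eq hex, hfg])

noncomputable def fExaInv (y : ℝ) : ℝ := if y ≤ 0 then exp y else y + 1

lemma fExaInv_pos (y : ℝ) : 0 < fExaInv y := by
  unfold fExaInv
  split_ifs with h
  · exact exp_pos y
  · linarith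

lemma fExaInv_le_exp (y : ℝ) : fExaInv y ≤ exp y := by
  unfold fExaInv
  split_ifs
  · exact le_rfl
  · exact add_one_le_exp y

lemma fExaInv_of_nonneg {y : ℝ} (hy : 0 ≤ y) : fExaInv y = y + 1 := by
  unfold fExaInv
  split_ifs with h
  · rw [le_antisymm h hy, exp_zero, zero_add]
  · rfl

lemma fExa_of_one_le {x : ℝ} (hx : 1 ≤ x) : fExa x = x - 1 := by
  unfold fExa
  split_ifs with h
  · rw [le_antisymm h hx, log_one, sub_self]
  · rfl

lemma fExa_le_log_add_self {x : ℝ} (hx : 0 < x) : fExa x ≤ log x + x := by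
  unfold fExa
  split_ifs with h
  · linarith
  · linarith [log_nonneg (not_le.1 h).le]

lemma rightInverse_fExaInv : Function.RightInverse fExaInv fExa := by
  intro y
  unfold fExaInv fExa
  split_ifs with hy h1 h1
  · exact log_exp y
  · exact absurd (exp_le_one_iff.2 hy) h1
  · linarith
  · ring

lemma strictMonoOn_fExa : StrictMonoOn fExa (Set.Ioi 0) := by
  intro x hx y hy hxy
  unfold fExa
  split_ifs with h1 h2 h2
  · exact log_lt_log hx hxy
  · linarith [log_nonpos (le_of_lt hx) h1]
  · linarith
  · linarith

lemma qam_fExa (a : ℕ → ℝ) (n : ℕ) :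
    qam fExa (Set.Ioi 0) (n + 1) (fun k : Fin (n + 1) => a k) =
      fExaInv ((∑ k ∈ range (n + 1), fExa (a k)) / (n + 1)) := by
  rw [qam_eq_of_rightInverse strictMonoOn_fExa.injOn fExaInv_pos rightInverse_fExaInv,
    Fin.sum_univ_eq_sum_range (fun k => fExa (a k))]
  push_cast; rfl

lemma qam_fExa_of_one_le {a : ℕ → ℝ} {n : ℕ} (ha : ∀ k ≤ n, 1 ≤ a k) :
    qam fExa (Set.Ioi 0) (n + 1) (fun k : Fin (n + 1) => a k) =
      (∑ k ∈ range (n + 1), a k) / (n + 1) := by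
  have hone : ∀ k ∈ range (n + 1), 1 ≤ a k := fun k hk => ha k (Nat.lt_succ_iff.1 (mem_range.1 hk))
  have hf : ∀ k ∈ range (n + 1), fExa (a k) = a k - 1 := fun k hk => fExa_of_one_le (hone k hk)
  have hmean : (∑ k ∈ range (n + 1), fExa (a k)) / (n + 1) =
      (∑ k ∈ range (n + 1), a k) / (n + 1) - 1 := by
    rw [sum_congr rfl hf, sum_sub_distrib, sum_const, card_range]
    field_simp
    ring
  have hpos : 1 ≤ (∑ k ∈ range (n + 1), a k) / (n + 1) := by
    rw [le_div_iff₀ (by positivity)]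
    simpa using card_nsmul_le_sum (range (n + 1)) a 1 hone
  rw [qam_fExa, hmean, fExaInv_of_nonneg (by linarith)]
  ring

theorem summable_qam_fExa {a : ℕ → ℝ} (ha : ∀ k, 0 < a k) (hs : Summable a) :
    Summable fun n : ℕ => qam fExa (Set.Ioi 0) (n + 1) (fun k : Fin (n + 1) => a k) := by
  refine Summable.of_nonneg_of_le (fun n => by rw [qam_fExa]; exact (fExaInv_pos _).le)
    (fun n => ?_) ((summable_exp_sum_log_div ha hs).mul_left (exp (∑' k, a k)))
  have hsum : ∑ k ∈ range (n + 1), a k ≤ ∑' k, a k :=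
    hs.sum_le_tsum _ fun k _ => (ha k).le
  have hpartial : 0 ≤ ∑ k ∈ range (n + 1), a k := sum_nonneg fun k _ => (ha k).le
  have hmean : (∑ k ∈ range (n + 1), fExa (a k)) / (n + 1) ≤
      ∑' k, a k + (∑ k ∈ range (n + 1), log (a k)) / (n + 1) := by
    have hf := sum_le_sum fun k (_ : k ∈ range (n + 1)) => fExa_le_log_add_self (ha k)
    have hdiv : (∑ k ∈ range (n + 1), a k) / (n + 1) ≤ ∑ k ∈ range (n + 1), a k :=
      div_le_self hpartial (by linarith [(n.cast_nonneg : (0:ℝ) ≤ n)])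
    calc (∑ k ∈ range (n + 1), fExa (a k)) / (n + 1)
        ≤ (∑ k ∈ range (n + 1), (log (a k) + a k)) / (n + 1) := by gcongr
      _ = (∑ k ∈ range (n + 1), a k) / (n + 1) + (∑ k ∈ range (n + 1), log (a k)) / (n + 1) := by
        rw [sum_add_distrib]; ring
      _ ≤ _ := by linarith
  rw [qam_fExa, ← exp_add]
  exact (fExaInv_le_exp _).trans (exp_le_exp.2 hmean)

-- Truncated subtraction makes `(1 / 2) ^ (k - K) = 1` for `k ≤ K`.
noncomputable def spikeSeq (K : ℕ) (k : ℕ) : ℝ :=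
  (if k = 0 then (K : ℝ) + 2 else 0) + (1 / 2) ^ (k - K)

lemma spikeSeq_pos (K k : ℕ) : 0 < spikeSeq K k := by
  unfold spikeSeq
  have : (0 : ℝ) ≤ if k = 0 then (K : ℝ) + 2 else 0 := by split_ifs <;> positivity
  positivity

lemma one_le_spikeSeq {K k : ℕ} (hk : k ≤ K) : 1 ≤ spikeSeq K k := by
  unfold spikeSeq
  rw [Nat.sub_eq_zero_of_le hk, pow_zero]
  split_ifs <;> linarith

lemma hasSum_spikeSeq (K : ℕ) : HasSum (spikeSeq K) (2 * (K + 2)) := by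
  have hgeom : HasSum (fun k : ℕ => ((1 : ℝ) / 2) ^ (k - K)) (K + 2) := by
    have hhead : ∑ i ∈ range K, ((1 : ℝ) / 2) ^ (i - K) = K := by
      rw [sum_congr rfl fun i hi => by rw [Nat.sub_eq_zero_of_le (mem_range.1 hi).le, pow_zero]]
      simp
    refine (hasSum_nat_add_iff' K).1 ?_
    simp only [Nat.add_sub_cancel, hhead, add_sub_cancel_left]
    exact hasSum_geometric_two
  rw [two_mul]
  exact (hasSum_ite_eq 0 ((K : ℝ) + 2)).add hgeom

lemma div_le_qam_spikeSeq {K n : ℕ} (hn : n ≤ K) :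
    ((K : ℝ) + 2) / (n + 1) ≤
      qam fExa (Set.Ioi 0) (n + 1) (fun k : Fin (n + 1) => spikeSeq K k) := by
  rw [qam_fExa_of_one_le fun k hk => one_le_spikeSeq (hk.trans hn)]
  gcongr
  calc ((K : ℝ) + 2) ≤ spikeSeq K 0 := by simp [spikeSeq]
    _ ≤ ∑ k ∈ range (n + 1), spikeSeq K k :=
      single_le_sum (fun k _ => (spikeSeq_pos K k).le) (mem_range.2 n.succ_pos)

lemma mul_log_le_tsum_qam_spikeSeq (K : ℕ) :
    ((K : ℝ) + 2) * log (K + 2) ≤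
      ∑' n, qam fExa (Set.Ioi 0) (n + 1) (fun k : Fin (n + 1) => spikeSeq K k) := by
  have hsummable := summable_qam_fExa (spikeSeq_pos K) (hasSum_spikeSeq K).summable
  have hharm : log (K + 2) ≤ ∑ n ∈ range (K + 1), 1 / ((n : ℝ) + 1) := by
    have := log_add_one_le_harmonic (K + 1)
    simp only [harmonic, Rat.cast_sum, Rat.cast_inv, Rat.cast_natCast] at this
    push_cast at this
    convert this using 2
    · ring
    · simp
  calc ((K : ℝ) + 2) * log (K + 2)
      ≤ ((K : ℝ) + 2) * ∑ n ∈ range (K + 1), 1 / ((n : ℝ) + 1) := by gcongr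
    _ = ∑ n ∈ range (K + 1), ((K : ℝ) + 2) / (n + 1) := by simp_rw [mul_sum, mul_one_div]
    _ ≤ ∑ n ∈ range (K + 1), qam fExa (Set.Ioi 0) (n + 1) (fun k : Fin (n + 1) => spikeSeq K k) :=
        sum_le_sum fun n hn => div_le_qam_spikeSeq (Nat.lt_succ_iff.1 (mem_range.1 hn))
    _ ≤ _ := hsummable.sum_le_tsum _ fun n _ => by rw [qam_fExa]; exact (fExaInv_pos _).le

theorem stmt_15 :
    (∀ a : ℕ → ℝ, (∀ n, 0 < a n) → Summable a →
      Summable (fun n => qam fExa (Set.Ioi 0) (n + 1) (fun k : Fin (n + 1) => a (k : ℕ)))) ∧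
    ¬ (∃ C : ℝ, ∀ a : ℕ → ℝ, (∀ n, 0 < a n) → Summable a →
      Summable (fun n => qam fExa (Set.Ioi 0) (n + 1) (fun k : Fin (n + 1) => a (k : ℕ))) ∧
      ∑' n, qam fExa (Set.Ioi 0) (n + 1) (fun k : Fin (n + 1) => a (k : ℕ)) ≤
        C * ∑' n, a n) := by
  refine ⟨fun a ha hs => summable_qam_fExa ha hs, fun ⟨C, hC⟩ => ?_⟩
  obtain ⟨K, hK⟩ : ∃ K : ℕ, 2 * C < log (K + 2) := by
    refine ⟨⌈exp (2 * C)⌉₊, ?_⟩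
    rw [lt_log_iff_exp_lt (by positivity)]
    linarith [Nat.le_ceil (exp (2 * C))]
  have hbound := (hC (spikeSeq K) (spikeSeq_pos K) (hasSum_spikeSeq K).summable).2
  rw [(hasSum_spikeSeq K).tsum_eq] at hbound
  nlinarith [mul_log_le_tsum_qam_spikeSeq K]
end

section
/- For p ∈ (0,1) and q < 0 (more generally pq ≤ 0), the Gini mean G_{p,q} is monotone: it is nondecreasing in each of its variables on finite tuples of positive reals. -/
/-!
For `p ≠ q` the Gini mean is symmetric in `(p, q)`, so we may assume `q ≤ 0 ≤ p`. Raising to a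
power `r ≥ 0` is monotone and to a power `r ≤ 0` antitone on positive reals, so increasing a
coordinate increases `∑ aᵢ ^ p` and decreases `∑ aᵢ ^ q`; the quotient increases, and so does its
power with the positive exponent `1 / (p - q)`. When `p = q = 0` the Gini mean is the geometric
mean `exp ((∑ log aᵢ) / n)`, which is monotone because `log` is.
-/

lemma gini_comm (p q : ℝ) {n : ℕ} {a : Fin n → ℝ} (ha : ∀ i, 0 ≤ a i) :
    gini p q n a = gini q p n a := by
  rcases eq_or_ne p q with rfl | hne
  · rfl
  have hsum : ∀ r : ℝ, 0 ≤ ∑ i, a i ^ r := fun r => Finset.sum_nonneg fun i _ => by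
    have := ha i; positivity
  rw [gini, gini, if_neg hne, if_neg hne.symm,
    show 1 / (q - p) = -(1 / (p - q)) by rw [← neg_sub p q, div_neg],
    Real.rpow_neg (div_nonneg (hsum q) (hsum p)), ← Real.inv_rpow (div_nonneg (hsum q) (hsum p)),
    inv_div]

lemma gini_zero_zero_le {n : ℕ} {a b : Fin n → ℝ} (ha : ∀ i, 0 < a i) (hab : ∀ i, a i ≤ b i) :
    gini 0 0 n a ≤ gini 0 0 n b := by
  simp only [gini, if_pos, Real.rpow_zero, one_mul]
  gcongr with i
  · exact ha i
  · exact hab i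

lemma gini_le_gini_of_lt {p q : ℝ} (hq : q ≤ 0) (hp : 0 ≤ p) (hqp : q < p) {n : ℕ} [NeZero n]
    {a b : Fin n → ℝ} (ha : ∀ i, 0 < a i) (hab : ∀ i, a i ≤ b i) :
    gini p q n a ≤ gini p q n b := by
  have hb : ∀ i, 0 < b i := fun i => (ha i).trans_le (hab i)
  rw [gini, gini, if_neg hqp.ne', if_neg hqp.ne']
  have hsum_p : ∑ i, a i ^ p ≤ ∑ i, b i ^ p :=
    Finset.sum_le_sum fun i _ => Real.rpow_le_rpow (ha i).le (hab i) hp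
  have hsum_q : ∑ i, b i ^ q ≤ ∑ i, a i ^ q :=
    Finset.sum_le_sum fun i _ => Real.rpow_le_rpow_of_nonpos (ha i) (hab i) hq
  have hpos : ∀ (c : Fin n → ℝ) (r : ℝ), (∀ i, 0 < c i) → 0 < ∑ i, c i ^ r :=
    fun c r hc => Finset.sum_pos (fun i _ => Real.rpow_pos_of_pos (hc i) r) Finset.univ_nonempty
  gcongr
  · exact (div_pos (hpos a p ha) (hpos a q ha)).le
  · exact (hpos b p hb).le
  · exact hpos b q hb

lemma gini_le_gini {p q : ℝ} (hq : q ≤ 0) (hp : 0 ≤ p) {n : ℕ} [NeZero n]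
    {a b : Fin n → ℝ} (ha : ∀ i, 0 < a i) (hab : ∀ i, a i ≤ b i) :
    gini p q n a ≤ gini p q n b := by
  rcases eq_or_ne q p with rfl | hne
  · obtain rfl := le_antisymm hq hp
    exact gini_zero_zero_le ha hab
  · exact gini_le_gini_of_lt hq hp ((hq.trans hp).lt_of_ne hne) ha hab

theorem stmt_18 (p q : ℝ) (hpq : p * q ≤ 0)
    (n : ℕ) (a b : Fin (n + 1) → ℝ) (ha : ∀ i, 0 < a i) (hab : ∀ i, a i ≤ b i) :
    gini p q (n + 1) a ≤ gini p q (n + 1) b := by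
  rcases mul_nonpos_iff.mp hpq with ⟨hp, hq⟩ | ⟨hp, hq⟩
  · exact gini_le_gini hq hp ha hab
  · have hb : ∀ i, 0 < b i := fun i => (ha i).trans_le (hab i)
    rw [gini_comm p q fun i => (ha i).le, gini_comm p q fun i => (hb i).le]
    exact gini_le_gini hp hq ha hab
end

section
/- Let M be a mean on an interval I with inf I = 0 and suppose (aₙ) is a sequence in I with Σ aₙ = +∞ and M(a₁,…,aₙ)/aₙ → +∞. Then M is not a Hardy mean: for every C > 0 there exists a summable sequence (cₙ) in I with Σₙ M(c₁,…,cₙ) > C·Σₙ cₙ. -/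
/-!
Keep `a` up to an index `K` and then continue with a tail from `I` of total mass at most `1`,
which exists because `inf I = 0`. The means of the first `K` terms only see `a`; since they
eventually dominate `(C + 1) aₙ` and `∑ aₙ = ∞`, for large `K` their sum exceeds
`C (a₀ + ⋯ + a_{K-1} + 1)`, a bound for `C ∑ cₙ`.
-/

open Filter Finset

theorem exists_summable_mem_tsum_le_of_sInf_eq_zero {I : Set ℝ} (hne : I.Nonempty)
    (hbdd : BddBelow I) (hInf : sInf I = 0) {ε : ℝ} (hε : 0 < ε) :
    ∃ b : ℕ → ℝ, (∀ n, b n ∈ I) ∧ Summable b ∧ ∑' n, b n ≤ ε := by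
  have hsmall (j : ℕ) : ∃ x ∈ I, x < ε / 2 / 2 ^ j := by
    simpa [hInf] using Real.lt_sInf_add_pos hne (by positivity : 0 < ε / 2 / 2 ^ j)
  choose b hbI hb_lt using hsmall
  have hb_nonneg (j : ℕ) : 0 ≤ b j := hInf ▸ csInf_le hbdd (hbI j)
  have hb : Summable b :=
    .of_nonneg_of_le hb_nonneg (fun j => (hb_lt j).le) (hasSum_geometric_two' ε).summable
  exact ⟨b, hbI, hb, hasSum_le (fun j => (hb_lt j).le) hb.hasSum (hasSum_geometric_two' ε)⟩

theorem hasSum_ite_lt {G : Type*} [AddCommGroup G] [TopologicalSpace G]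
    [IsTopologicalAddGroup G] {b : ℕ → G} {s : G} (hb : HasSum b s) (a : ℕ → G) (K : ℕ) :
    HasSum (fun n => if n < K then a n else b (n - K)) (∑ n ∈ range K, a n + s) := by
  rw [← hasSum_nat_add_iff' K]
  have hprefix : ∑ n ∈ range K, (if n < K then a n else b (n - K)) = ∑ n ∈ range K, a n :=
    sum_congr rfl fun n hn => if_pos (mem_range.mp hn)
  simpa [hprefix] using hb

theorem tendsto_sum_range_sub_mul_sum_range_atTop {f g : ℕ → ℝ} (hg : ∀ n, 0 < g n)
    (hg_div : ¬ Summable g) (hfg : Tendsto (fun n => f n / g n) atTop atTop) (C : ℝ) :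
    Tendsto (fun N => ∑ n ∈ range N, f n - C * ∑ n ∈ range N, g n) atTop atTop := by
  obtain ⟨n₀, hn₀⟩ := eventually_atTop.mp (hfg.eventually_ge_atTop (C + 1))
  have hG := (not_summable_iff_tendsto_nat_atTop_of_nonneg fun n => (hg n).le).mp hg_div
  set h : ℕ → ℝ := fun n => f n - (C + 1) * g n
  refine tendsto_atTop_mono' _ ?_ (tendsto_atTop_add_const_left _ (∑ n ∈ range n₀, h n) hG)
  filter_upwards [eventually_ge_atTop n₀] with N hN
  have htail : 0 ≤ ∑ n ∈ Ico n₀ N, h n := sum_nonneg fun n hn => by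
    have := (le_div_iff₀ (hg n)).mp (hn₀ n (mem_Ico.mp hn).1)
    simp only [h]; linarith
  calc ∑ n ∈ range n₀, h n + ∑ n ∈ range N, g n
      ≤ ∑ n ∈ range N, h n + ∑ n ∈ range N, g n := by
        rw [← sum_range_add_sum_Ico h hN]; linarith
    _ = ∑ n ∈ range N, f n - C * ∑ n ∈ range N, g n := by
        simp only [h, sum_sub_distrib, ← mul_sum]; ring

theorem stmt_19_general (I : Set ℝ) (hIpos : I ⊆ Set.Ioi 0)
    (hInf : sInf I = 0)
    (M : ∀ n : ℕ, (Fin n → ℝ) → ℝ)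
    (a : ℕ → ℝ) (ha : ∀ n, a n ∈ I) (hdiv : ¬ Summable a)
    (hlim : Filter.Tendsto
      (fun n => M (n + 1) (fun k : Fin (n + 1) => a (k : ℕ)) / a n)
      Filter.atTop Filter.atTop) :
    ∀ C : ℝ, 0 < C → ∃ c : ℕ → ℝ, (∀ n, c n ∈ I) ∧ Summable c ∧
      ∃ N : ℕ, C * ∑' n, c n <
        ∑ n ∈ Finset.range N, M (n + 1) (fun k : Fin (n + 1) => c (k : ℕ)) := by
  intro C hC
  obtain ⟨b, hbI, hb, hb_le⟩ := exists_summable_mem_tsum_le_of_sInf_eq_zero ⟨a 0, ha 0⟩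
    ⟨0, fun x hx => (hIpos hx).le⟩ hInf one_pos
  obtain ⟨K, hK⟩ := ((tendsto_sum_range_sub_mul_sum_range_atTop (fun n => hIpos (ha n)) hdiv
    hlim C).eventually_gt_atTop C).exists
  set c : ℕ → ℝ := fun n => if n < K then a n else b (n - K)
  have hc : HasSum c (∑ n ∈ range K, a n + ∑' n, b n) := hasSum_ite_lt hb.hasSum a K
  refine ⟨c, fun n => ?_, hc.summable, K, ?_⟩
  · by_cases hn : n < K
    · simpa [c, hn] using ha n
    · simpa [c, hn] using hbI (n - K)
  have hprefix : ∀ n ∈ range K, M (n + 1) (fun k : Fin (n + 1) => c k) =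
      M (n + 1) (fun k : Fin (n + 1) => a k) := fun n hn => by
    congr 1; funext k
    exact if_pos (lt_of_le_of_lt (Nat.lt_succ_iff.mp k.isLt) (mem_range.mp hn))
  rw [hc.tsum_eq, sum_congr rfl hprefix]
  have := mul_le_mul_of_nonneg_left hb_le hC.le
  linarith

theorem stmt_19 (I : Set ℝ) (hne : I.Nonempty) (hIpos : I ⊆ Set.Ioi 0)
    (hInf : sInf I = 0)
    (M : ∀ n : ℕ, (Fin n → ℝ) → ℝ) (hmean : IsMeanOn I M)
    (a : ℕ → ℝ) (ha : ∀ n, a n ∈ I) (hdiv : ¬ Summable a)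
    (hlim : Filter.Tendsto
      (fun n => M (n + 1) (fun k : Fin (n + 1) => a (k : ℕ)) / a n)
      Filter.atTop Filter.atTop) :
    ∀ C : ℝ, 0 < C → ∃ c : ℕ → ℝ, (∀ n, c n ∈ I) ∧ Summable c ∧
      ∃ N : ℕ, C * ∑' n, c n <
        ∑ n ∈ Finset.range N, M (n + 1) (fun k : Fin (n + 1) => c (k : ℕ)) :=
  stmt_19_general I hIpos hInf M a ha hdiv hlim
end
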